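/- arXiv:2412.03120 — 3 statements merged into one kernel-verified Lean document; each statement's English description precedes it below -/
import Mathlib

section
/- Strong duality for regularized sequentially composed optimal transport: the infimum, over all feasible tuples (P^(i))_{i=1}^M, of Σ_{i=1}^M (⟨C^(i), P^(i)⟩ − ε·H(P^(i))) equals the supremum, over all tuples (f^(i))_{i=1}^{M+1} with f^(i) ∈ ℝ^{m_i}, of the dual function L((f^(i))_{i=1}^{M+1}). -/
open Matrix Finset Real

noncomputable section

/- Throughout, the number of composed transport plans is `M = N + 2` for `N : ℕ`, which
exactly captures the assumption `M ≥ 2`.  Vectors are indexed by `1, …, M + 1 = N + 3`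
and matrices by `1, …, M = N + 2`. -/

/-- Componentwise (Frobenius) inner product `⟨X, Y⟩ = Σ_{j,k} X_{jk} Y_{jk}`. -/
def frob {m n : ℕ} (X Y : Matrix (Fin m) (Fin n) ℝ) : ℝ := ∑ j, ∑ k, X j k * Y j k

/-- The entropy `H(P) = −Σ_{j,k} P_{jk} (log P_{jk} − 1)` (with `0·log 0 = 0`,
as is the case for `Real.log`). -/
def ent {m n : ℕ} (P : Matrix (Fin m) (Fin n) ℝ) : ℝ :=
  -∑ j, ∑ k, P j k * (Real.log (P j k) - 1)

/-- Feasibility of a tuple of transportation plans for the sequentially composed OT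
problem with `M = N + 2`: the first marginal is `a`, the last is `b`, and consecutive
plans are consistent on the boundaries. -/
def FeasibleT (N : ℕ) (m : ℕ → ℕ)
    (a : Fin (m 1) → ℝ) (b : Fin (m (N+3)) → ℝ)
    (P : ∀ i : ℕ, Matrix (Fin (m i)) (Fin (m (i+1))) ℝ) : Prop :=
  (P 1 *ᵥ fun _ => 1) = a ∧ ((P (N+2))ᵀ *ᵥ fun _ => 1) = b ∧
    ∀ i : ℕ, 1 ≤ i → i ≤ N + 1 → ((P i)ᵀ *ᵥ fun _ => 1) = (P (i+1) *ᵥ fun _ => 1)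

/-- Entrywise nonnegativity of a tuple of matrices, for the relevant indices `1, …, N+2`. -/
def NonnegT (N : ℕ) (m : ℕ → ℕ)
    (P : ∀ i : ℕ, Matrix (Fin (m i)) (Fin (m (i+1))) ℝ) : Prop :=
  ∀ i : ℕ, 1 ≤ i → i ≤ N + 2 → ∀ j k, 0 ≤ P i j k

/-- The regularized primal objective `Σ_{i=1}^{M} (⟨C⁽ⁱ⁾, P⁽ⁱ⁾⟩ − ε H(P⁽ⁱ⁾))`. -/
def primalVal (N : ℕ) (m : ℕ → ℕ)
    (C : ∀ i : ℕ, Matrix (Fin (m i)) (Fin (m (i+1))) ℝ) (ε : ℝ)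
    (P : ∀ i : ℕ, Matrix (Fin (m i)) (Fin (m (i+1))) ℝ) : ℝ :=
  ∑ i ∈ Finset.Icc 1 (N+2), (frob (C i) (P i) - ε * ent (P i))

/-- The dual function `L((f⁽ⁱ⁾)_{i=1}^{M+1})` of the regularized sequentially composed OT
problem with `M = N + 2`. -/
def dualGen (N : ℕ) (m : ℕ → ℕ)
    (C : ∀ i : ℕ, Matrix (Fin (m i)) (Fin (m (i+1))) ℝ)
    (a : Fin (m 1) → ℝ) (b : Fin (m (N+3)) → ℝ) (ε : ℝ)
    (f : ∀ i : ℕ, Fin (m i) → ℝ) : ℝ :=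
  (∑ j, f 1 j * a j) + (∑ k, f (N+3) k * b k)
    - ε * ((∑ j, ∑ k, Real.exp ((f (N+2) j + f (N+3) k - C (N+2) j k) / ε))
      + ∑ i ∈ Finset.Icc 1 (N+1), ∑ j, ∑ k, Real.exp ((f i j - f (i+1) k - C i j k) / ε))

/-!
Flattening the plans into one vector `x` indexed by their entries, the primal problem becomes an
entropic program: minimise `∑ₑ (cₑ xₑ + ε xₑ (log xₑ - 1))` over `x ≥ 0` subject to
`x ⬝ᵥ E f = β f` for all node potentials `f`, where `(E f)ₑ` is the combination of potentials that
`dualGen` attaches to the entry `e` and `β f = ⟨f 1, a⟩ + ⟨f (N+3), b⟩`. The dual function is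
`β f - ε ∑ₑ exp (((E f)ₑ - cₑ) / ε)`, and weak duality is the Fenchel–Young inequality entrywise.

For the converse, the feasible set is compact, so the primal problem has a minimiser `x`. Since
`p log p` has slope `-∞` at `0`, `x` is positive wherever some feasible point is; the product of
the marginals (uniform at the intermediate nodes) shows that this is every entry outside the rows
with `aⱼ = 0` and the columns with `bₖ = 0`. Stationarity along the feasible directions supported
where `x > 0` puts `c + ε log x` in the range of `E` there, which gives potentials `g`. Finally,
with `z` the indicator of the zeros of `a` and `b`, the dual values at `g - T • z` converge to the
primal value at `x` as `T → ∞`.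
-/

open Filter Topology

def regCost (c ε p : ℝ) : ℝ := c * p + ε * (p * (log p - 1))

lemma regCost_convexOn (c : ℝ) {ε : ℝ} (hε : 0 ≤ ε) :
    ConvexOn ℝ (Set.Ici 0) (regCost c ε) := by
  have hent : ConvexOn ℝ (Set.Ici (0:ℝ)) fun p => p * (log p - 1) := by
    refine (convexOn_mul_log.sub (concaveOn_id (convex_Ici 0))).congr fun p _ => ?_
    simp [mul_sub]
  exact ((LinearMap.mulLeft ℝ c).convexOn (convex_Ici 0)).add (hent.smul hε)

lemma regCost_mul {t q : ℝ} (c ε : ℝ) (ht : 0 < t) (hq : 0 < q) :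
    regCost c ε (t * q) = t * regCost c ε q + ε * t * q * log t := by
  simp only [regCost, log_mul ht.ne' hq.ne']
  ring

lemma hasDerivAt_regCost (c ε : ℝ) {p : ℝ} (hp : 0 < p) :
    HasDerivAt (regCost c ε) (c + ε * log p) p := by
  have h := ((hasDerivAt_id' p).const_mul c).add
    (((hasDerivAt_id' p).mul ((hasDerivAt_log hp.ne').sub_const 1)).const_mul ε)
  refine HasDerivAt.congr_deriv (f := regCost c ε) h ?_
  field_simp
  ring

/-- Fenchel–Young inequality for `regCost` and its convex conjugate `s ↦ ε exp ((s - c) / ε)`. -/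
lemma mul_sub_exp_le_regCost (c : ℝ) {ε p : ℝ} (hε : 0 < ε) (hp : 0 ≤ p) (s : ℝ) :
    p * s - ε * exp ((s - c) / ε) ≤ regCost c ε p := by
  rcases hp.eq_or_lt with rfl | hp
  · simp only [regCost, zero_mul, mul_zero, add_zero, zero_sub]
    linarith [mul_pos hε (exp_pos ((s - c) / ε))]
  · have h := add_one_le_exp ((s - c) / ε - log p)
    rw [exp_sub, exp_log hp, le_div_iff₀ hp] at h
    have : ε * ((s - c) / ε) = s - c := by field_simp
    simp only [regCost]
    nlinarith [mul_le_mul_of_nonneg_left h hε.le]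

lemma continuous_regCost (c ε : ℝ) : Continuous (regCost c ε) := by
  have h : regCost c ε = fun p => c * p + ε * (p * log p - p) := by
    funext p; simp only [regCost]; ring
  rw [h]
  exact (continuous_const.mul continuous_id).add
    (continuous_const.mul (continuous_mul_log.sub continuous_id))

lemma exists_apply_eq_of_forall_dotProduct_eq_zero {K ι U : Type*} [Field K] [Fintype ι]
    [AddCommGroup U] [Module K U] (E : U →ₗ[K] ι → K) (p : ι → Prop) [DecidablePred p]
    (v : ι → K) (h : ∀ d : ι → K, (∀ e, ¬ p e → d e = 0) → (∀ u, d ⬝ᵥ E u = 0) → d ⬝ᵥ v = 0) :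
    ∃ u, ∀ e, p e → E u e = v e := by
  classical
  let ρ : (ι → K) →ₗ[K] ι → K := LinearMap.pi fun e => if p e then LinearMap.proj e else 0
  have hρ : ∀ y e, ρ y e = if p e then y e else 0 := fun y e => by
    by_cases he : p e <;> simp [ρ, he]
  have hφ : ∀ (φ : Module.Dual K (ι → K)) y,
      φ (ρ y) = ρ (fun e => φ fun j => if e = j then 1 else 0) ⬝ᵥ y := fun φ y => by
    rw [φ.pi_apply_eq_sum_univ, dotProduct]
    refine sum_congr rfl fun e _ => ?_
    simp only [hρ, smul_eq_mul]
    split_ifs <;> simp [mul_comm]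
  have hmem : ρ v ∈ LinearMap.range (ρ ∘ₗ E) := by
    rw [← Subspace.forall_mem_dualAnnihilator_apply_eq_zero_iff]
    intro φ hφann
    rw [hφ]
    refine h _ (fun e he => by simp [hρ, he]) fun u => ?_
    rw [← hφ]
    exact (Submodule.mem_dualAnnihilator φ).1 hφann _ ⟨u, rfl⟩
  obtain ⟨u, hu⟩ := hmem
  exact ⟨u, fun e he => by simpa [hρ, he] using congrFun hu e⟩

section EntropicProgram

variable {ι U : Type*} [Fintype ι] [AddCommGroup U] [Module ℝ U]

def regObjective (c : ι → ℝ) (ε : ℝ) (x : ι → ℝ) : ℝ := ∑ e, regCost (c e) ε (x e)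

def regDual (E : U →ₗ[ℝ] ι → ℝ) (β : Module.Dual ℝ U) (c : ι → ℝ) (ε : ℝ) (u : U) : ℝ :=
  β u - ε * ∑ e, exp ((E u e - c e) / ε)

def constraintSet (E : U →ₗ[ℝ] ι → ℝ) (β : Module.Dual ℝ U) : Set (ι → ℝ) :=
  {x | 0 ≤ x ∧ ∀ u, x ⬝ᵥ E u = β u}

variable {E : U →ₗ[ℝ] ι → ℝ} {β : Module.Dual ℝ U} {c : ι → ℝ} {ε : ℝ} {x : ι → ℝ}

lemma regDual_le_regObjective (hε : 0 < ε) (hx : x ∈ constraintSet E β) (u : U) :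
    regDual E β c ε u ≤ regObjective c ε x := by
  rw [regDual, ← hx.2 u, dotProduct, mul_sum, ← sum_sub_distrib]
  exact sum_le_sum fun e _ => mul_sub_exp_le_regCost (c e) hε (hx.1 e) (E u e)

lemma add_smul_mem_constraintSet {x d : ι → ℝ} (hx : x ∈ constraintSet E β)
    (hd : ∀ u, d ⬝ᵥ E u = 0) {t : ℝ} (ht : 0 ≤ x + t • d) : x + t • d ∈ constraintSet E β :=
  ⟨ht, fun u => by rw [add_dotProduct, smul_dotProduct, hd, hx.2, smul_zero, add_zero]⟩

lemma exists_isMinOn_regObjective (c : ι → ℝ) (ε : ℝ) (hne : (constraintSet E β).Nonempty)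
    {r : ι → ℝ} (hr : ∀ x ∈ constraintSet E β, x ≤ r) :
    ∃ x ∈ constraintSet E β, IsMinOn (regObjective c ε) (constraintSet E β) x := by
  have hclosed : IsClosed (constraintSet E β) := by
    have : constraintSet E β = Set.Ici 0 ∩ ⋂ u, {x | x ⬝ᵥ E u = β u} := by
      ext x; simp [constraintSet]
    rw [this]
    exact isClosed_Ici.inter <| isClosed_iInter fun u =>
      isClosed_eq (continuous_id.dotProduct continuous_const) continuous_const
  have hcompact := isCompact_Icc.of_isClosed_subset hclosed fun x hx => ⟨hx.1, hr x hx⟩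
  exact hcompact.exists_isMinOn hne <| Continuous.continuousOn <|
    continuous_finsetSum _ fun e _ => (continuous_regCost _ _).comp (continuous_apply e)

lemma regObjective_add_smul_sub_le (hε : 0 ≤ ε) {x y : ι → ℝ} (hx : 0 ≤ x) (hy : 0 ≤ y)
    {t : ℝ} (ht0 : 0 < t) (ht1 : t < 1) {e : ι} (hxe : x e = 0) (hye : 0 < y e) :
    regObjective c ε (x + t • (y - x)) ≤ (1 - t) * regObjective c ε x + t * regObjective c ε y
      + ε * t * y e * log t := by
  classical
  set gap : ι → ℝ := fun e' => regCost (c e') ε (x e' + t * (y e' - x e'))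
    - ((1 - t) * regCost (c e') ε (x e') + t * regCost (c e') ε (y e'))
  have hgap : ∀ e', gap e' ≤ 0 := fun e' => by
    have := (regCost_convexOn (c e') hε).2 (hx e') (hy e')
      (show (0:ℝ) ≤ 1 - t by linarith) ht0.le (by ring)
    simp only [smul_eq_mul] at this
    simp only [gap, sub_nonpos]
    rwa [show x e' + t * (y e' - x e') = (1 - t) * x e' + t * y e' by ring]
  -- at the coordinate where `x` vanishes, convexity is strict by the amount `ε t (y e) log t`
  have hgap_e : gap e = ε * t * y e * log t := by
    simp only [gap, hxe, sub_zero, zero_add, regCost_mul (c e) ε ht0 hye]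
    simp [regCost]
  have hsum : ∑ e', gap e' ≤ gap e := by
    rw [← add_sum_erase _ _ (mem_univ e)]
    linarith [sum_nonpos fun e' (_ : e' ∈ univ.erase e) => hgap e']
  have hobj : ∑ e', gap e' = regObjective c ε (x + t • (y - x))
      - ((1 - t) * regObjective c ε x + t * regObjective c ε y) := by
    simp only [gap, regObjective, sum_sub_distrib, sum_add_distrib, mul_sum]
    rfl
  linarith

lemma IsMinOn.pos_of_mem_constraintSet (hε : 0 < ε)
    (hmin : IsMinOn (regObjective c ε) (constraintSet E β) x) (hx : x ∈ constraintSet E β)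
    {y : ι → ℝ} (hy : y ∈ constraintSet E β) {e : ι} (hye : 0 < y e) : 0 < x e := by
  by_contra hxe
  have hx0 : x e = 0 := le_antisymm (not_lt.1 hxe) (hx.1 e)
  set Δ := regObjective c ε y - regObjective c ε x
  have key : ∀ t, 0 < t → t < 1 → -(ε * y e * log t) ≤ Δ := by
    intro t ht0 ht1
    have hmem : x + t • (y - x) ∈ constraintSet E β := by
      refine add_smul_mem_constraintSet hx (fun u => by rw [sub_dotProduct, hx.2, hy.2, sub_self])
        fun e' => ?_
      have hx' : 0 ≤ x e' := hx.1 e'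
      have hy' : 0 ≤ y e' := hy.1 e'
      simp only [Pi.add_apply, Pi.smul_apply, Pi.sub_apply, smul_eq_mul, Pi.zero_apply]
      nlinarith [mul_nonneg (sub_nonneg.2 ht1.le) hx', mul_nonneg ht0.le hy']
    have hle : regObjective c ε x ≤ regObjective c ε (x + t • (y - x)) := hmin hmem
    have := regObjective_add_smul_sub_le hε.le hx.1 hy.1 ht0 ht1 hx0 hye (c := c)
    by_contra hlt
    nlinarith [mul_lt_mul_of_pos_left (not_le.1 hlt) ht0]
  set R := |Δ| / (ε * y e) + 1
  have hεy : 0 < ε * y e := mul_pos hε hye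
  have h := key (exp (-R)) (exp_pos _) (exp_lt_one_iff.2 (by linarith [show 0 < R by positivity]))
  rw [log_exp] at h
  have : ε * y e * R = |Δ| + ε * y e := by rw [mul_add, mul_div_cancel₀ _ hεy.ne', mul_one]
  linarith [le_abs_self Δ]

lemma IsMinOn.sum_mul_log_eq_zero (hmin : IsMinOn (regObjective c ε) (constraintSet E β) x)
    (hx : x ∈ constraintSet E β) {d : ι → ℝ} (hd : ∀ e, x e = 0 → d e = 0)
    (hdE : ∀ u, d ⬝ᵥ E u = 0) : ∑ e, d e * (c e + ε * log (x e)) = 0 := by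
  have hderiv : ∀ e, HasDerivAt (fun t => regCost (c e) ε (x e + t * d e))
      (d e * (c e + ε * log (x e))) 0 := fun e => by
    rcases (hx.1 e).eq_or_lt with h0 | hpos
    · simp only [hd e h0.symm, mul_zero, zero_mul, add_zero]
      exact hasDerivAt_const _ _
    · have hline : HasDerivAt (fun t => x e + t * d e) (d e) 0 := by
        simpa using ((hasDerivAt_id' (0:ℝ)).mul_const (d e)).const_add (x e)
      rw [mul_comm]
      exact (hasDerivAt_regCost (c e) ε hpos).comp_of_eq 0 hline (by simp)
  have hlocal : IsLocalMin (fun t : ℝ => regObjective c ε (x + t • d)) 0 := by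
    have hnonneg : ∀ᶠ t in 𝓝 (0:ℝ), 0 ≤ x + t • d := by
      refine Filter.eventually_all.2 fun e => ?_
      rcases (hx.1 e).eq_or_lt with h0 | hpos
      · refine Filter.Eventually.of_forall fun t => ?_
        simp [← h0, hd e h0.symm]
      · have hcont : Tendsto (fun t : ℝ => x e + t * d e) (𝓝 0) (𝓝 (x e)) := by
          simpa using ((continuous_id.mul continuous_const).const_add (x e)).tendsto' 0 _ rfl
        filter_upwards [hcont.eventually (lt_mem_nhds hpos)] with t ht
        simpa using ht.le
    filter_upwards [hnonneg] with t ht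
    simpa using hmin (add_smul_mem_constraintSet hx hdE ht)
  exact hlocal.hasDerivAt_eq_zero (HasDerivAt.fun_sum fun e _ => hderiv e)

lemma IsMinOn.exists_eq_add_mul_log (hmin : IsMinOn (regObjective c ε) (constraintSet E β) x)
    (hx : x ∈ constraintSet E β) : ∃ u, ∀ e, 0 < x e → E u e = c e + ε * log (x e) :=
  exists_apply_eq_of_forall_dotProduct_eq_zero E (fun e => 0 < x e) _ fun d hd hdE =>
    hmin.sum_mul_log_eq_zero hx (fun e h0 => hd e (by simp [h0])) hdE

lemma tendsto_regDual_sub_smul (hε : 0 < ε) (hx : x ∈ constraintSet E β) {g z : U}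
    (hg : ∀ e, 0 < x e → E g e = c e + ε * log (x e)) (hz : ∀ e, 0 ≤ E z e)
    (hzx : ∀ e, E z e = 0 ↔ 0 < x e) (hβz : β z = 0) :
    Tendsto (fun T : ℝ => regDual E β c ε (g - T • z)) atTop (𝓝 (regObjective c ε x)) := by
  have hterm : ∀ e, Tendsto (fun T : ℝ => exp ((E (g - T • z) e - c e) / ε)) atTop (𝓝 (x e)) := by
    intro e
    simp only [map_sub, map_smul, Pi.sub_apply, Pi.smul_apply, smul_eq_mul]
    by_cases hxe : 0 < x e
    · have hexp : (E g e - c e) / ε = log (x e) := by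
        rw [hg e hxe]; field_simp; ring
      simp only [(hzx e).2 hxe, mul_zero, sub_zero, hexp, exp_log hxe]
      exact tendsto_const_nhds
    · have hpos : 0 < E z e := (hz e).lt_of_ne fun h => hxe ((hzx e).1 h.symm)
      rw [show x e = 0 from le_antisymm (not_lt.1 hxe) (hx.1 e)]
      refine tendsto_exp_atBot.comp (Tendsto.atBot_div_const hε ?_)
      refine tendsto_atBot_add_const_right _ _ (tendsto_atBot_add_const_left _ _ ?_)
      exact tendsto_neg_atTop_atBot.comp (tendsto_id.atTop_mul_const hpos)
  have hvalue : regObjective c ε x = β g - ε * ∑ e, x e := by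
    rw [← hx.2 g, dotProduct, mul_sum, ← sum_sub_distrib]
    refine sum_congr rfl fun e _ => ?_
    rcases (hx.1 e).eq_or_lt with h0 | hpos
    · simp [regCost, ← h0]
    · rw [regCost, hg e hpos]; ring
  rw [hvalue]
  have hβ : ∀ T : ℝ, β (g - T • z) = β g := fun T => by simp [hβz]
  simp only [regDual, hβ]
  exact (tendsto_finsetSum _ fun e _ => hterm e).const_mul ε |>.const_sub _

theorem regDual_isLUB_of_certificate (hε : 0 < ε) {r : ι → ℝ}
    (hbdd : ∀ x ∈ constraintSet E β, x ≤ r) {y : ι → ℝ} (hy : y ∈ constraintSet E β) {z : U}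
    (hz : ∀ e, 0 ≤ E z e) (hβz : β z = 0) (hyz : ∀ e, E z e = 0 → 0 < y e) :
    ∃ x ∈ constraintSet E β, IsMinOn (regObjective c ε) (constraintSet E β) x ∧
      IsLUB (Set.range (regDual E β c ε)) (regObjective c ε x) := by
  obtain ⟨x, hx, hmin⟩ := exists_isMinOn_regObjective c ε ⟨y, hy⟩ hbdd
  obtain ⟨g, hg⟩ := hmin.exists_eq_add_mul_log hx
  have hzx : ∀ e, E z e = 0 ↔ 0 < x e := fun e => by
    refine ⟨fun h => hmin.pos_of_mem_constraintSet hε hx hy (hyz e h), fun hxe => ?_⟩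
    have hsum : ∑ e, x e * E z e = 0 := by rw [← dotProduct, hx.2, hβz]
    have := (sum_eq_zero_iff_of_nonneg fun e _ => mul_nonneg (hx.1 e) (hz e)).1 hsum e (mem_univ e)
    exact (mul_eq_zero.1 this).resolve_left hxe.ne'
  refine ⟨x, hx, hmin, ?_, fun v hv => ?_⟩
  · rintro _ ⟨u, rfl⟩
    exact regDual_le_regObjective hε hx u
  · exact le_of_tendsto' (tendsto_regDual_sub_smul hε hx hg hz hzx hβz) fun T => hv ⟨_, rfl⟩

end EntropicProgram

lemma sum_sum_mul_add {p q : Type*} [Fintype p] [Fintype q] (Q : Matrix p q ℝ) (x : p → ℝ)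
    (y : q → ℝ) :
    ∑ j, ∑ k, Q j k * (x j + y k) = x ⬝ᵥ (Q *ᵥ fun _ => 1) + y ⬝ᵥ (Qᵀ *ᵥ fun _ => 1) := by
  simp only [mul_add, sum_add_distrib, dotProduct, mulVec, transpose_apply, mul_one, mul_sum]
  rw [sum_comm (f := fun j k => Q j k * y k)]
  simp only [mul_comm]

lemma sum_sum_mul_sub {p q : Type*} [Fintype p] [Fintype q] (Q : Matrix p q ℝ) (x : p → ℝ)
    (y : q → ℝ) :
    ∑ j, ∑ k, Q j k * (x j - y k) = x ⬝ᵥ (Q *ᵥ fun _ => 1) - y ⬝ᵥ (Qᵀ *ᵥ fun _ => 1) := by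
  simpa [sub_eq_add_neg, neg_dotProduct] using sum_sum_mul_add Q x (-y)

lemma sum_Icc_one_succ {M : Type*} [AddCommMonoid M] (g : ℕ → M) (n : ℕ) :
    ∑ i ∈ Icc 1 (n + 1), g i = g 1 + ∑ i ∈ Icc 1 n, g (i + 1) := by
  induction n with
  | zero => simp
  | succ n ih => rw [sum_Icc_succ_top (by omega), ih, sum_Icc_succ_top (by omega), add_assoc]

lemma eq_of_sub_dotProduct_eq {n : Type*} [Fintype n] {v w : n → ℝ}
    (h : (v - w) ⬝ᵥ v = (v - w) ⬝ᵥ w) : v = w :=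
  sub_eq_zero.1 (dotProduct_self_eq_zero.1 (by rw [dotProduct_sub, h, sub_self]))

namespace SeqOT

variable {N : ℕ} {m : ℕ → ℕ}

abbrev Entry (N : ℕ) (m : ℕ → ℕ) : Type :=
  Σ i : Finset.Icc 1 (N + 2), Fin (m i) × Fin (m (i + 1))

variable (N) in
def flat (P : ∀ i : ℕ, Matrix (Fin (m i)) (Fin (m (i + 1))) ℝ) (e : Entry N m) : ℝ :=
  P e.1 e.2.1 e.2.2

def unflat (x : Entry N m → ℝ) : ∀ i : ℕ, Matrix (Fin (m i)) (Fin (m (i + 1))) ℝ :=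
  fun i j k => if h : i ∈ Finset.Icc 1 (N + 2) then x ⟨⟨i, h⟩, j, k⟩ else 0

lemma flat_unflat (x : Entry N m → ℝ) : flat N (unflat x) = x := by
  funext e
  simp [flat, unflat, e.1.2]

variable (N m) in
/-- With the sign change at the last plan, taken from `dualGen`, this map is the transpose of the
marginal constraints of `FeasibleT` (see `feasibleT_iff`). -/
def edgePot : (∀ i, Fin (m i) → ℝ) →ₗ[ℝ] Entry N m → ℝ where
  toFun f e := if (e.1 : ℕ) = N + 2 then f e.1 e.2.1 + f (e.1 + 1) e.2.2
    else f e.1 e.2.1 - f (e.1 + 1) e.2.2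
  map_add' f g := by ext e; simp only [Pi.add_apply]; split_ifs <;> ring
  map_smul' t f := by
    ext e; simp only [Pi.smul_apply, smul_eq_mul, RingHom.id_apply]; split_ifs <;> ring

lemma edgePot_apply (f : ∀ i, Fin (m i) → ℝ) (e : Entry N m) :
    edgePot N m f e = if (e.1 : ℕ) = N + 2 then f e.1 e.2.1 + f (e.1 + 1) e.2.2
      else f e.1 e.2.1 - f (e.1 + 1) e.2.2 := rfl

def boundaryPairing (a : Fin (m 1) → ℝ) (b : Fin (m (N + 3)) → ℝ) :
    Module.Dual ℝ (∀ i, Fin (m i) → ℝ) where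
  toFun f := f 1 ⬝ᵥ a + f (N + 3) ⬝ᵥ b
  map_add' f g := by simp only [Pi.add_apply, add_dotProduct]; ring
  map_smul' t f := by simp [smul_dotProduct, mul_add]

lemma sum_entry (F : ∀ i : ℕ, Fin (m i) → Fin (m (i + 1)) → ℝ) :
    ∑ e : Entry N m, F e.1 e.2.1 e.2.2 = ∑ i ∈ Finset.Icc 1 (N + 2), ∑ j, ∑ k, F i j k := by
  rw [Fintype.sum_sigma]
  simp only [Fintype.sum_prod_type]
  exact Finset.sum_coe_sort _ fun i => ∑ j, ∑ k, F i j k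

lemma primalVal_eq (C : ∀ i : ℕ, Matrix (Fin (m i)) (Fin (m (i + 1))) ℝ) (ε : ℝ)
    (P : ∀ i : ℕ, Matrix (Fin (m i)) (Fin (m (i + 1))) ℝ) :
    primalVal N m C ε P = regObjective (flat N C) ε (flat N P) := by
  simp only [regObjective, flat]
  rw [sum_entry (fun i j k => regCost (C i j k) ε (P i j k)), primalVal]
  refine sum_congr rfl fun i _ => ?_
  simp only [frob, ent, regCost, mul_neg, sub_neg_eq_add, mul_sum, ← sum_add_distrib]

lemma dualGen_eq (C : ∀ i : ℕ, Matrix (Fin (m i)) (Fin (m (i + 1))) ℝ)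
    (a : Fin (m 1) → ℝ) (b : Fin (m (N + 3)) → ℝ) (ε : ℝ) (f : ∀ i, Fin (m i) → ℝ) :
    dualGen N m C a b ε f = regDual (edgePot N m) (boundaryPairing a b) (flat N C) ε f := by
  simp only [regDual, edgePot_apply, flat]
  rw [sum_entry (fun i j k => exp (((if i = N + 2 then f i j + f (i + 1) k
    else f i j - f (i + 1) k) - C i j k) / ε)), sum_Icc_succ_top (by omega)]
  have hmid : ∀ i ∈ Finset.Icc 1 (N + 1), i ≠ N + 2 := fun i hi => by
    rw [Finset.mem_Icc] at hi; omega
  simp only [dualGen, boundaryPairing, LinearMap.coe_mk, AddHom.coe_mk, dotProduct, add_assoc,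
    Nat.reduceAdd, ite_true]
  rw [add_comm (∑ i ∈ Icc 1 (N + 1), _)]
  congr 3
  exact sum_congr rfl fun i hi => by simp only [if_neg (hmid i hi)]

lemma flat_dotProduct_edgePot (Q : ∀ i : ℕ, Matrix (Fin (m i)) (Fin (m (i + 1))) ℝ)
    (f : ∀ i, Fin (m i) → ℝ) :
    flat N Q ⬝ᵥ edgePot N m f = f 1 ⬝ᵥ (Q 1 *ᵥ fun _ => 1)
      + ∑ i ∈ Icc 1 (N + 1), f (i + 1) ⬝ᵥ ((Q (i + 1) *ᵥ fun _ => 1) - (Q i)ᵀ *ᵥ fun _ => 1)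
      + f (N + 3) ⬝ᵥ ((Q (N + 2))ᵀ *ᵥ fun _ => 1) := by
  have hrow : ∑ i ∈ Icc 1 (N + 1), f i ⬝ᵥ (Q i *ᵥ fun _ => 1)
        + f (N + 2) ⬝ᵥ (Q (N + 2) *ᵥ fun _ => 1)
      = f 1 ⬝ᵥ (Q 1 *ᵥ fun _ => 1)
        + ∑ i ∈ Icc 1 (N + 1), f (i + 1) ⬝ᵥ (Q (i + 1) *ᵥ fun _ => 1) := by
    rw [← sum_Icc_succ_top (by omega), sum_Icc_one_succ (fun i => f i ⬝ᵥ (Q i *ᵥ fun _ => 1))]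
  have hmid : ∀ i ∈ Icc 1 (N + 1), ∑ j, ∑ k, Q i j k * (if i = N + 2 then f i j + f (i + 1) k
      else f i j - f (i + 1) k)
        = f i ⬝ᵥ (Q i *ᵥ fun _ => 1) - f (i + 1) ⬝ᵥ ((Q i)ᵀ *ᵥ fun _ => 1) :=
    fun i hi => by
      rw [mem_Icc] at hi
      simp only [if_neg (show i ≠ N + 2 by omega)]
      exact sum_sum_mul_sub _ _ _
  rw [dotProduct]
  simp only [edgePot_apply, flat]
  rw [sum_entry (fun i j k => Q i j k * (if i = N + 2 then f i j + f (i + 1) k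
    else f i j - f (i + 1) k)), sum_Icc_succ_top (by omega),
    sum_congr rfl hmid]
  simp only [add_assoc, Nat.reduceAdd, ite_true, sum_sum_mul_add, sum_sub_distrib, dotProduct_sub]
  linear_combination hrow

lemma feasibleT_iff {a : Fin (m 1) → ℝ} {b : Fin (m (N + 3)) → ℝ}
    {P : ∀ i : ℕ, Matrix (Fin (m i)) (Fin (m (i + 1))) ℝ} :
    FeasibleT N m a b P ↔ ∀ f, flat N P ⬝ᵥ edgePot N m f = boundaryPairing a b f := by
  simp only [flat_dotProduct_edgePot, boundaryPairing, LinearMap.coe_mk, AddHom.coe_mk]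
  constructor
  · rintro ⟨h1, hlast, hmid⟩ f
    rw [h1, hlast, sum_eq_zero fun i hi => ?_, add_zero]
    rw [mem_Icc] at hi
    rw [hmid i hi.1 hi.2, sub_self, dotProduct_zero]
  -- a potential supported at a single node isolates the constraint at that node
  intro h
  refine ⟨eq_of_sub_dotProduct_eq ?_, eq_of_sub_dotProduct_eq ?_,
    fun i hi1 hi2 => (eq_of_sub_dotProduct_eq ?_).symm⟩
  · have := h (Function.update 0 1 ((P 1 *ᵥ fun _ => 1) - a))
    rw [Function.update_self, Function.update_of_ne (by omega : N + 3 ≠ 1),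
      sum_eq_zero fun i hi => by
        rw [Function.update_of_ne (by rw [mem_Icc] at hi; omega), Pi.zero_apply, zero_dotProduct]]
      at this
    simpa using this
  · have := h (Function.update 0 (N + 3) (((P (N + 2))ᵀ *ᵥ fun _ => 1) - b))
    rw [Function.update_self, Function.update_of_ne (by omega : 1 ≠ N + 3),
      sum_eq_zero fun i hi => by
        rw [Function.update_of_ne (by rw [mem_Icc] at hi; omega), Pi.zero_apply, zero_dotProduct]]
      at this
    simpa using this
  · have := h (Function.update 0 (i + 1) ((P (i + 1) *ᵥ fun _ => 1) - (P i)ᵀ *ᵥ fun _ => 1))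
    rw [Function.update_of_ne (by omega : 1 ≠ i + 1),
      Function.update_of_ne (by omega : N + 3 ≠ i + 1),
      sum_eq_single_of_mem i (mem_Icc.2 ⟨hi1, hi2⟩) fun i' _ hi' => by
        rw [Function.update_of_ne (by omega), Pi.zero_apply, zero_dotProduct],
      Function.update_self] at this
    simpa [dotProduct_sub, sub_eq_zero] using this

lemma flat_mem_constraintSet_iff {a : Fin (m 1) → ℝ} {b : Fin (m (N + 3)) → ℝ}
    {P : ∀ i : ℕ, Matrix (Fin (m i)) (Fin (m (i + 1))) ℝ} :
    flat N P ∈ constraintSet (edgePot N m) (boundaryPairing a b) ↔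
      NonnegT N m P ∧ FeasibleT N m a b P := by
  refine and_congr ⟨fun h i hi1 hi2 j k => h ⟨⟨i, mem_Icc.2 ⟨hi1, hi2⟩⟩, j, k⟩, fun h e => ?_⟩
    feasibleT_iff.symm
  exact h e.1 (mem_Icc.1 e.1.2).1 (mem_Icc.1 e.1.2).2 e.2.1 e.2.2

lemma le_one_of_mem_constraintSet {a : Fin (m 1) → ℝ} {b : Fin (m (N + 3)) → ℝ}
    (hasum : ∑ j, a j = 1) {x : Entry N m → ℝ}
    (hx : x ∈ constraintSet (edgePot N m) (boundaryPairing a b)) : x ≤ 1 := by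
  intro e
  -- the potential equal to `1` up to node `e.1` and to `0` after it measures the mass of plan `e.1`
  let f : ∀ i, Fin (m i) → ℝ := fun i _ => if i ≤ e.1 then 1 else 0
  have hbounds : ∀ e' : Entry N m, 1 ≤ (e'.1 : ℕ) ∧ (e'.1 : ℕ) ≤ N + 2 := fun e' => mem_Icc.1 e'.1.2
  have he : edgePot N m f e = 1 := by
    have := hbounds e
    simp only [edgePot_apply, f]
    split_ifs <;> first | omega | norm_num
  have hnonneg : ∀ e', 0 ≤ edgePot N m f e' := fun e' => by
    have := hbounds e'
    simp only [edgePot_apply, f]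
    split_ifs <;> first | omega | norm_num
  have hmass : x ⬝ᵥ edgePot N m f = 1 := by
    have := hbounds e
    rw [hx.2]
    simp [boundaryPairing, f, dotProduct, hasum, show 1 ≤ (e.1 : ℕ) by omega,
      show ¬ N + 3 ≤ (e.1 : ℕ) by omega]
  calc x e = x e * edgePot N m f e := by rw [he, mul_one]
    _ ≤ x ⬝ᵥ edgePot N m f :=
      single_le_sum (fun e' _ => mul_nonneg (hx.1 e') (hnonneg e')) (mem_univ e)
    _ = 1 := hmass

variable (N) in
def refMarginal (a : Fin (m 1) → ℝ) (b : Fin (m (N + 3)) → ℝ) : ∀ i, Fin (m i) → ℝ :=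
  Function.update (Function.update (fun i _ => ((m i : ℝ))⁻¹) 1 a) (N + 3) b

section refMarginal

variable {a : Fin (m 1) → ℝ} {b : Fin (m (N + 3)) → ℝ}

lemma refMarginal_one : refMarginal N a b 1 = a := by
  rw [refMarginal, Function.update_of_ne (by omega), Function.update_self]

lemma refMarginal_last : refMarginal N a b (N + 3) = b := Function.update_self ..

lemma refMarginal_of_ne {i : ℕ} (h1 : i ≠ 1) (h2 : i ≠ N + 3) :
    refMarginal N a b i = fun _ => ((m i : ℝ))⁻¹ := by
  rw [refMarginal, Function.update_of_ne h2, Function.update_of_ne h1]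

lemma refMarginal_nonneg (ha : ∀ j, 0 ≤ a j) (hb : ∀ k, 0 ≤ b k) (i : ℕ) (j : Fin (m i)) :
    0 ≤ refMarginal N a b i j := by
  by_cases h2 : i = N + 3
  · subst h2; rw [refMarginal_last]; exact hb j
  by_cases h1 : i = 1
  · subst h1; rw [refMarginal_one]; exact ha j
  rw [refMarginal_of_ne h1 h2]; positivity

lemma sum_refMarginal (hm : ∀ i, 0 < m i) (hasum : ∑ j, a j = 1) (hbsum : ∑ k, b k = 1)
    (i : ℕ) : ∑ j, refMarginal N a b i j = 1 := by
  by_cases h2 : i = N + 3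
  · subst h2; rw [refMarginal_last, hbsum]
  by_cases h1 : i = 1
  · subst h1; rw [refMarginal_one, hasum]
  rw [refMarginal_of_ne h1 h2, sum_const, card_univ, Fintype.card_fin, nsmul_eq_mul,
    mul_inv_cancel₀ (by exact_mod_cast (hm i).ne')]

end refMarginal

variable (N) in
def refPlan (a : Fin (m 1) → ℝ) (b : Fin (m (N + 3)) → ℝ) :
    ∀ i : ℕ, Matrix (Fin (m i)) (Fin (m (i + 1))) ℝ :=
  fun i => vecMulVec (refMarginal N a b i) (refMarginal N a b (i + 1))

lemma flat_refPlan_mem_constraintSet {a : Fin (m 1) → ℝ} {b : Fin (m (N + 3)) → ℝ}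
    (hm : ∀ i, 0 < m i) (ha : ∀ j, 0 ≤ a j) (hb : ∀ k, 0 ≤ b k) (hasum : ∑ j, a j = 1)
    (hbsum : ∑ k, b k = 1) :
    flat N (refPlan N a b) ∈ constraintSet (edgePot N m) (boundaryPairing a b) := by
  have hrow : ∀ i, (refPlan N a b i *ᵥ fun _ => 1) = refMarginal N a b i := fun i => by
    ext j
    simp [refPlan, mulVec, dotProduct, vecMulVec_apply, ← mul_sum,
      sum_refMarginal hm hasum hbsum]
  have hcol : ∀ i, ((refPlan N a b i)ᵀ *ᵥ fun _ => 1) = refMarginal N a b (i + 1) := fun i => by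
    ext k
    simp [refPlan, mulVec, dotProduct, vecMulVec_apply, ← sum_mul,
      sum_refMarginal hm hasum hbsum]
  refine flat_mem_constraintSet_iff.2 ⟨fun i _ _ j k => ?_, ?_, ?_, fun i _ _ => ?_⟩
  · exact mul_nonneg (refMarginal_nonneg ha hb i j) (refMarginal_nonneg ha hb (i + 1) k)
  · rw [hrow, refMarginal_one]
  · rw [hcol, refMarginal_last]
  · rw [hcol, hrow]

def zeroIndicator (w : ∀ i, Fin (m i) → ℝ) : ∀ i, Fin (m i) → ℝ :=
  fun i j => if w i j = 0 then 1 else 0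

lemma zeroIndicator_dotProduct (w : ∀ i, Fin (m i) → ℝ) (i : ℕ) :
    zeroIndicator w i ⬝ᵥ w i = 0 :=
  sum_eq_zero fun j _ => by by_cases h : w i j = 0 <;> simp [zeroIndicator, h]

section zeroIndicator

variable {a : Fin (m 1) → ℝ} {b : Fin (m (N + 3)) → ℝ}

lemma boundaryPairing_zeroIndicator :
    boundaryPairing a b (zeroIndicator (refMarginal N a b)) = 0 := by
  have h1 := zeroIndicator_dotProduct (refMarginal N a b) 1
  have h2 := zeroIndicator_dotProduct (refMarginal N a b) (N + 3)
  rw [refMarginal_one] at h1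
  rw [refMarginal_last] at h2
  simp [boundaryPairing, h1, h2]

lemma edgePot_zeroIndicator (hm : ∀ i, 0 < m i) (e : Entry N m) :
    edgePot N m (zeroIndicator (refMarginal N a b)) e
      = zeroIndicator (refMarginal N a b) e.1 e.2.1
        + zeroIndicator (refMarginal N a b) (e.1 + 1) e.2.2 := by
  rw [edgePot_apply]
  split_ifs with h
  · rfl
  have := mem_Icc.1 e.1.2
  have hzero : zeroIndicator (refMarginal N a b) (e.1 + 1) e.2.2 = 0 := by
    simp [zeroIndicator, refMarginal_of_ne (show (e.1 : ℕ) + 1 ≠ 1 by omega)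
      (show (e.1 : ℕ) + 1 ≠ N + 3 by omega), (hm _).ne']
  rw [hzero, sub_zero, add_zero]

lemma zeroIndicator_nonneg (w : ∀ i, Fin (m i) → ℝ) (i : ℕ) (j : Fin (m i)) :
    0 ≤ zeroIndicator w i j := by
  unfold zeroIndicator; split_ifs <;> norm_num

lemma edgePot_zeroIndicator_nonneg (hm : ∀ i, 0 < m i) (e : Entry N m) :
    0 ≤ edgePot N m (zeroIndicator (refMarginal N a b)) e := by
  rw [edgePot_zeroIndicator hm]
  exact add_nonneg (zeroIndicator_nonneg _ _ _) (zeroIndicator_nonneg _ _ _)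

lemma flat_refPlan_pos_of_edgePot_eq_zero (hm : ∀ i, 0 < m i) (ha : ∀ j, 0 ≤ a j)
    (hb : ∀ k, 0 ≤ b k) {e : Entry N m}
    (he : edgePot N m (zeroIndicator (refMarginal N a b)) e = 0) :
    0 < flat N (refPlan N a b) e := by
  rw [edgePot_zeroIndicator hm] at he
  have h := (add_eq_zero_iff_of_nonneg (zeroIndicator_nonneg _ _ _)
    (zeroIndicator_nonneg _ _ _)).1 he
  simp only [zeroIndicator, ite_eq_right_iff, one_ne_zero, imp_false] at h
  exact mul_pos ((refMarginal_nonneg ha hb _ _).lt_of_ne' h.1)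
    ((refMarginal_nonneg ha hb _ _).lt_of_ne' h.2)

end zeroIndicator

end SeqOT

open SeqOT

theorem strong_duality_regularized_seqOT_general
    (N : ℕ) (m : ℕ → ℕ) (hm : ∀ i, 0 < m i)
    (C : ∀ i : ℕ, Matrix (Fin (m i)) (Fin (m (i+1))) ℝ)
    (a : Fin (m 1) → ℝ) (b : Fin (m (N+3)) → ℝ)
    (ha : ∀ j, 0 ≤ a j) (hb : ∀ k, 0 ≤ b k)
    (hasum : ∑ j, a j = 1) (hbsum : ∑ k, b k = 1)
    (ε : ℝ) (hε : 0 < ε) :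
    sInf {v : ℝ | ∃ P : ∀ i : ℕ, Matrix (Fin (m i)) (Fin (m (i+1))) ℝ,
        NonnegT N m P ∧ FeasibleT N m a b P ∧ v = primalVal N m C ε P}
      = sSup {v : ℝ | ∃ f : ∀ i : ℕ, Fin (m i) → ℝ, v = dualGen N m C a b ε f} := by
  obtain ⟨x, hx, hmin, hlub⟩ := regDual_isLUB_of_certificate (c := flat N C) hε
    (fun _ => le_one_of_mem_constraintSet hasum)
    (flat_refPlan_mem_constraintSet hm ha hb hasum hbsum)
    (edgePot_zeroIndicator_nonneg hm)
    boundaryPairing_zeroIndicator (fun _ => flat_refPlan_pos_of_edgePot_eq_zero hm ha hb)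
  have hprimal : IsLeast {v : ℝ | ∃ P : ∀ i : ℕ, Matrix (Fin (m i)) (Fin (m (i+1))) ℝ,
      NonnegT N m P ∧ FeasibleT N m a b P ∧ v = primalVal N m C ε P}
      (regObjective (flat N C) ε x) := by
    refine ⟨⟨unflat x, ?_⟩, ?_⟩
    · rw [← and_assoc, ← flat_mem_constraintSet_iff, primalVal_eq, flat_unflat]
      exact ⟨hx, rfl⟩
    · rintro _ ⟨P, hPn, hPf, rfl⟩
      rw [primalVal_eq]
      exact hmin (flat_mem_constraintSet_iff.2 ⟨hPn, hPf⟩)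
  have hdual : {v : ℝ | ∃ f : ∀ i : ℕ, Fin (m i) → ℝ, v = dualGen N m C a b ε f}
      = Set.range (regDual (edgePot N m) (boundaryPairing a b) (flat N C) ε) := by
    ext v
    simp [dualGen_eq, eq_comm]
  rw [hprimal.csInf_eq, hdual, hlub.csSup_eq (Set.range_nonempty _)]

/-- **Strong duality for regularized sequentially composed optimal transport**
(Prop. 2.3): the optimal value of the regularized primal problem over feasible tuples of
nonnegative plans equals the optimal value of the Lagrange dual problem. -/
theorem strong_duality_regularized_seqOT
    (N : ℕ) (m : ℕ → ℕ) (hm : ∀ i, 0 < m i)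
    (C : ∀ i : ℕ, Matrix (Fin (m i)) (Fin (m (i+1))) ℝ)
    (hC : ∀ i, ∀ j k, 0 ≤ C i j k)
    (a : Fin (m 1) → ℝ) (b : Fin (m (N+3)) → ℝ)
    (ha : ∀ j, 0 ≤ a j) (hb : ∀ k, 0 ≤ b k)
    (hasum : ∑ j, a j = 1) (hbsum : ∑ k, b k = 1)
    (ε : ℝ) (hε : 0 < ε) :
    sInf {v : ℝ | ∃ P : ∀ i : ℕ, Matrix (Fin (m i)) (Fin (m (i+1))) ℝ,
        NonnegT N m P ∧ FeasibleT N m a b P ∧ v = primalVal N m C ε P}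
      = sSup {v : ℝ | ∃ f : ∀ i : ℕ, Fin (m i) → ℝ, v = dualGen N m C a b ε f} :=
  strong_duality_regularized_seqOT_general N m hm C a b ha hb hasum hbsum ε hε
end
end

section
/- Suppose the tuple (f̂^(i))_{i=1}^{M+1} of real vectors maximizes the dual function L over all tuples of real vectors, and set û^(i) := exp(f̂^(i)/ε) (entrywise exponential). Then the tuple of matrices (P̂^(i))_{i=1}^M defined by P̂^(i) := diag(û^(i)) K^(i) diag(1/û^(i+1)) for i = 1,…,M−1 and P̂^(M) := diag(û^(M)) K^(M) diag(û^(M+1)) is feasible and optimal for the regularized sequentially composed optimal transport problem, i.e., it minimizes Σ_{i=1}^M (⟨C^(i), P^(i)⟩ − ε·H(P^(i))) over all feasible tuples. -/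
/-!
Write `g_i(f)` for the edge potential `(f_i j + σ_i f_{i+1} k)_{j,k}`, where `σ_i = -1` for
`i < M` and `σ_M = 1`. Telescoping along the chain, a tuple `P` is feasible iff
`Σ_i ⟨P_i, g_i(f)⟩ = ⟨f_1, a⟩ + ⟨f_{M+1}, b⟩` for every `f`. For feasible `P` this gives
`L(f) = Σ_i Σ_{j,k} (P_i g_i(f) - ε exp ((g_i(f) - C_i) / ε))`, and Fenchel–Young,
`x t - exp t ≤ x (log x - 1)`, bounds this entrywise by the primal objective of `P`, with
equality for the Gibbs plans `P_i = exp ((g_i(f) - C_i) / ε)`; for `f = f̂` these are the `P̂_i`.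
At the maximizer `f̂` the derivative of `L` in every direction `v`, which is
`⟨v_1, a⟩ + ⟨v_{M+1}, b⟩ - Σ_i ⟨P̂_i, g_i(v)⟩`, vanishes. So `P̂` is feasible, and its primal
value is `L(f̂)`, a lower bound for the primal value of every feasible tuple.
-/

open Matrix Finset Real

noncomputable section

lemma mul_sub_exp_le_mul_log_sub_one {x : ℝ} (hx : 0 ≤ x) (t : ℝ) :
    x * t - exp t ≤ x * (log x - 1) := by
  rcases hx.eq_or_lt with rfl | hx
  · simp [(exp_pos t).le]
  · have h := add_one_le_exp (t - log x)
    rw [exp_sub, exp_log hx, le_div_iff₀ hx] at h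
    nlinarith

section FenchelYoung

variable {p q : ℕ} (X P L : Matrix (Fin p) (Fin q) ℝ) {ε : ℝ}

lemma frob_sub_sum_exp_le (hP : ∀ j k, 0 ≤ P j k) (hε : 0 < ε) :
    frob P L - ε * ∑ j, ∑ k, exp ((L j k - X j k) / ε) ≤ frob X P - ε * ent P := by
  have key : ∀ j k, P j k * L j k - ε * exp ((L j k - X j k) / ε)
      ≤ X j k * P j k + ε * (P j k * (log (P j k) - 1)) := fun j k => by
    have h := mul_le_mul_of_nonneg_left
      (mul_sub_exp_le_mul_log_sub_one (hP j k) ((L j k - X j k) / ε)) hε.le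
    rw [mul_sub, ← mul_assoc, mul_comm ε, mul_assoc, mul_div_cancel₀ _ hε.ne'] at h
    linarith
  have := Finset.sum_le_sum fun j (_ : j ∈ univ) =>
    Finset.sum_le_sum fun k (_ : k ∈ univ) => key j k
  simpa only [frob, ent, Finset.sum_sub_distrib, Finset.sum_add_distrib, Finset.mul_sum,
    mul_neg, sub_neg_eq_add] using this

lemma frob_sub_sum_exp_eq (hε : ε ≠ 0) (hP : ∀ j k, P j k = exp ((L j k - X j k) / ε)) :
    frob P L - ε * ∑ j, ∑ k, exp ((L j k - X j k) / ε) = frob X P - ε * ent P := by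
  have key : ∀ j k, P j k * L j k - ε * exp ((L j k - X j k) / ε)
      = X j k * P j k + ε * (P j k * (log (P j k) - 1)) := fun j k => by
    rw [hP j k, log_exp]
    field_simp
    ring
  simp only [frob, ent, Finset.mul_sum, mul_neg, sub_neg_eq_add, ← Finset.sum_sub_distrib,
    ← Finset.sum_add_distrib, key]

end FenchelYoung

lemma frob_of_add_mul {p q : ℕ} (Q : Matrix (Fin p) (Fin q) ℝ) (x : Fin p → ℝ) (s : ℝ)
    (y : Fin q → ℝ) :
    frob Q (Matrix.of fun j k => x j + s * y k)
      = x ⬝ᵥ (Q *ᵥ fun _ => 1) + s * (y ⬝ᵥ (Qᵀ *ᵥ fun _ => 1)) := by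
  simp only [frob, dotProduct, mulVec, transpose_apply, of_apply, mul_one, mul_add,
    Finset.sum_add_distrib, Finset.mul_sum]
  rw [Finset.sum_comm (f := fun j k => Q j k * (s * y k))]
  congr 1 <;> refine Finset.sum_congr rfl fun _ _ => Finset.sum_congr rfl fun _ _ => by ring

lemma ite_zero_dotProduct {n : Type*} [Fintype n] (P : Prop) [Decidable P] (v w : n → ℝ) :
    (if P then v else 0) ⬝ᵥ w = if P then v ⬝ᵥ w else 0 := by
  split_ifs <;> simp

lemma eq_of_forall_dotProduct_eq {m : ℕ → ℕ} {p : ℕ} {x y : Fin (m p) → ℝ}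
    (h : ∀ c : ∀ i, Fin (m i) → ℝ, c p ⬝ᵥ x = c p ⬝ᵥ y) : x = y :=
  dotProduct_eq x y fun u => by simpa [dotProduct_comm] using h (Pi.single p u)

lemma hasDerivAt_exp_add_mul_div (A B ε : ℝ) :
    HasDerivAt (fun t => exp ((A + t * B) / ε)) (exp (A / ε) * (B / ε)) 0 := by
  simpa using ((((hasDerivAt_id (0 : ℝ)).mul_const B).const_add A).div_const ε).exp

section Chain

def edgeSign (N i : ℕ) : ℝ := if i ≤ N + 1 then -1 else 1

def edgePot (N : ℕ) (m : ℕ → ℕ) (f : ∀ i, Fin (m i) → ℝ) (i : ℕ) :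
    Matrix (Fin (m i)) (Fin (m (i+1))) ℝ :=
  Matrix.of fun j k => f i j + edgeSign N i * f (i+1) k

def gibbsPlan (N : ℕ) (m : ℕ → ℕ) (C : ∀ i : ℕ, Matrix (Fin (m i)) (Fin (m (i+1))) ℝ)
    (ε : ℝ) (f : ∀ i, Fin (m i) → ℝ) (i : ℕ) : Matrix (Fin (m i)) (Fin (m (i+1))) ℝ :=
  Matrix.of fun j k => exp ((edgePot N m f i j k - C i j k) / ε)

def constraintPairing (N : ℕ) (m : ℕ → ℕ)
    (Q : ∀ i : ℕ, Matrix (Fin (m i)) (Fin (m (i+1))) ℝ) (f : ∀ i, Fin (m i) → ℝ) : ℝ :=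
  ∑ i ∈ Icc 1 (N+2), frob (Q i) (edgePot N m f i)

variable {N : ℕ} {m : ℕ → ℕ}

lemma edgeSign_of_le {i : ℕ} (h : i ≤ N + 1) : edgeSign N i = -1 := if_pos h

lemma edgeSign_self_add_two : edgeSign N (N + 2) = 1 := if_neg (by omega)

lemma sum_Icc_one_add_two {M : Type*} [AddCommMonoid M] (g : ℕ → M) :
    ∑ i ∈ Icc 1 (N+2), g i = ∑ i ∈ Icc 1 (N+1), g i + g (N+2) :=
  Finset.sum_Icc_succ_top (by omega) g

lemma edgePot_add_smul (f v : ∀ i, Fin (m i) → ℝ) (t : ℝ) (i : ℕ) :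
    edgePot N m (f + t • v) i = edgePot N m f i + t • edgePot N m v i := by
  ext j k
  simp only [edgePot, Pi.add_apply, Pi.smul_apply, smul_eq_mul, Matrix.add_apply,
    Matrix.smul_apply, of_apply]
  ring

lemma constraintPairing_eq_sum_dotProduct (Q : ∀ i : ℕ, Matrix (Fin (m i)) (Fin (m (i+1))) ℝ)
    (f : ∀ i, Fin (m i) → ℝ) :
    constraintPairing N m Q f = ∑ i ∈ Icc 1 (N+2), (f i ⬝ᵥ (Q i *ᵥ fun _ => 1)
      + edgeSign N i * (f (i+1) ⬝ᵥ ((Q i)ᵀ *ᵥ fun _ => 1))) :=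
  Finset.sum_congr rfl fun _ _ => frob_of_add_mul _ _ _ _

variable {C : ∀ i : ℕ, Matrix (Fin (m i)) (Fin (m (i+1))) ℝ} {a : Fin (m 1) → ℝ}
  {b : Fin (m (N+3)) → ℝ} {ε : ℝ}

lemma FeasibleT.constraintPairing_eq {Q : ∀ i : ℕ, Matrix (Fin (m i)) (Fin (m (i+1))) ℝ}
    (hQ : FeasibleT N m a b Q) (f : ∀ i, Fin (m i) → ℝ) :
    constraintPairing N m Q f = f 1 ⬝ᵥ a + f (N+3) ⬝ᵥ b := by
  obtain ⟨hfirst, hlast, hmid⟩ := hQ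
  set row : ℕ → ℝ := fun i => f i ⬝ᵥ (Q i *ᵥ fun _ => 1)
  have htel := Finset.sum_Icc_sub (m := 1) (n := N + 1) (by omega) row
  have hcol : ∑ i ∈ Icc 1 (N+1), edgeSign N i * (f (i+1) ⬝ᵥ ((Q i)ᵀ *ᵥ fun _ => 1))
      = -∑ i ∈ Icc 1 (N+1), row (i+1) := by
    rw [← Finset.sum_neg_distrib]
    refine Finset.sum_congr rfl fun i hi => ?_
    rw [edgeSign_of_le (mem_Icc.1 hi).2, hmid i (mem_Icc.1 hi).1 (mem_Icc.1 hi).2, neg_one_mul]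
  rw [constraintPairing_eq_sum_dotProduct, Finset.sum_add_distrib, sum_Icc_one_add_two,
    sum_Icc_one_add_two, hcol, edgeSign_self_add_two, hlast, ← hfirst]
  rw [Finset.sum_sub_distrib] at htel
  linear_combination -htel

lemma feasibleT_of_constraintPairing_eq {Q : ∀ i : ℕ, Matrix (Fin (m i)) (Fin (m (i+1))) ℝ}
    (H : ∀ f, constraintPairing N m Q f = f 1 ⬝ᵥ a + f (N+3) ⬝ᵥ b) : FeasibleT N m a b Q := by
  refine ⟨eq_of_forall_dotProduct_eq fun c => ?_, eq_of_forall_dotProduct_eq fun c => ?_,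
    fun i h1 h2 => (eq_of_forall_dotProduct_eq fun c => ?_).symm⟩
  · simpa [constraintPairing_eq_sum_dotProduct, Finset.sum_add_distrib, ite_zero_dotProduct,
      Finset.sum_ite_eq'] using H fun k => if k = 1 then c k else 0
  · simpa [constraintPairing_eq_sum_dotProduct, Finset.sum_add_distrib, ite_zero_dotProduct,
      Finset.sum_ite_eq', edgeSign_self_add_two] using H fun k => if k = N + 3 then c k else 0
  · simpa [constraintPairing_eq_sum_dotProduct, Finset.sum_add_distrib, ite_zero_dotProduct,
      Finset.sum_ite_eq', edgeSign_of_le h2, h1, h2, show i ≤ N + 2 by omega,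
      show i ≠ 0 by omega, show N + 3 ≠ i + 1 by omega, add_neg_eq_zero]
      using H fun k => if k = i + 1 then c k else 0

lemma dualGen_eq (f : ∀ i, Fin (m i) → ℝ) :
    dualGen N m C a b ε f = f 1 ⬝ᵥ a + f (N+3) ⬝ᵥ b
      - ε * ∑ i ∈ Icc 1 (N+2), ∑ j, ∑ k, gibbsPlan N m C ε f i j k := by
  have hmid : ∀ i ∈ Icc 1 (N+1), ∀ j k,
      gibbsPlan N m C ε f i j k = exp ((f i j - f (i+1) k - C i j k) / ε) := by
    intro i hi j k
    simp [gibbsPlan, edgePot, edgeSign_of_le (mem_Icc.1 hi).2, sub_eq_add_neg]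
  simp only [sum_Icc_one_add_two, Finset.sum_congr rfl fun i hi => Finset.sum_congr rfl
    fun j _ => Finset.sum_congr rfl fun k _ => hmid i hi j k]
  simp [dualGen, dotProduct, gibbsPlan, edgePot, edgeSign_self_add_two, add_comm]

lemma hasDerivAt_dualGen_line (hε : ε ≠ 0) (f v : ∀ i, Fin (m i) → ℝ) :
    HasDerivAt (fun t : ℝ => dualGen N m C a b ε (f + t • v))
      (v 1 ⬝ᵥ a + v (N+3) ⬝ᵥ b - constraintPairing N m (gibbsPlan N m C ε f) v) 0 := by
  have hgibbs : ∀ t i j k, gibbsPlan N m C ε (f + t • v) i j k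
      = exp ((edgePot N m f i j k - C i j k + t * edgePot N m v i j k) / ε) := fun t i j k => by
    simp only [gibbsPlan, of_apply, edgePot_add_smul, Matrix.add_apply, Matrix.smul_apply,
      smul_eq_mul]
    ring_nf
  simp only [dualGen_eq, hgibbs, Pi.add_apply, Pi.smul_apply, add_dotProduct, smul_dotProduct,
    smul_eq_mul]
  have hlin : HasDerivAt
      (fun t : ℝ => f 1 ⬝ᵥ a + t * (v 1 ⬝ᵥ a) + (f (N+3) ⬝ᵥ b + t * (v (N+3) ⬝ᵥ b)))
      (v 1 ⬝ᵥ a + v (N+3) ⬝ᵥ b) 0 := by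
    simpa using (((hasDerivAt_id (0 : ℝ)).mul_const (v 1 ⬝ᵥ a)).const_add (f 1 ⬝ᵥ a)).fun_add
      (((hasDerivAt_id (0 : ℝ)).mul_const (v (N+3) ⬝ᵥ b)).const_add (f (N+3) ⬝ᵥ b))
  have hexp := HasDerivAt.fun_sum (u := Icc 1 (N+2)) fun i _ => HasDerivAt.fun_sum
    (u := univ) fun j _ => HasDerivAt.fun_sum (u := univ) fun k _ =>
      hasDerivAt_exp_add_mul_div (edgePot N m f i j k - C i j k) (edgePot N m v i j k) ε
  refine (hlin.fun_sub (hexp.const_mul ε)).congr_deriv ?_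
  simp only [constraintPairing, frob, gibbsPlan, of_apply, Finset.mul_sum]
  congr 1
  refine Finset.sum_congr rfl fun i _ => Finset.sum_congr rfl fun j _ =>
    Finset.sum_congr rfl fun k _ => ?_
  field_simp

lemma constraintPairing_gibbsPlan_of_forall_le (hε : ε ≠ 0) {f : ∀ i, Fin (m i) → ℝ}
    (hf : ∀ g, dualGen N m C a b ε g ≤ dualGen N m C a b ε f) (v : ∀ i, Fin (m i) → ℝ) :
    constraintPairing N m (gibbsPlan N m C ε f) v = v 1 ⬝ᵥ a + v (N+3) ⬝ᵥ b := by
  have hmax : IsLocalMax (fun t : ℝ => dualGen N m C a b ε (f + t • v)) 0 :=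
    Filter.Eventually.of_forall fun t => by simpa using hf (f + t • v)
  linarith [hmax.hasDerivAt_eq_zero (hasDerivAt_dualGen_line (C := C) (a := a) (b := b) hε f v)]

lemma dualGen_eq_sum_of_feasibleT {Q : ∀ i : ℕ, Matrix (Fin (m i)) (Fin (m (i+1))) ℝ}
    (hQ : FeasibleT N m a b Q) (f : ∀ i, Fin (m i) → ℝ) :
    dualGen N m C a b ε f = ∑ i ∈ Icc 1 (N+2),
      (frob (Q i) (edgePot N m f i) - ε * ∑ j, ∑ k, gibbsPlan N m C ε f i j k) := by
  rw [dualGen_eq, ← hQ.constraintPairing_eq f, constraintPairing, Finset.mul_sum,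
    Finset.sum_sub_distrib]

lemma dualGen_le_primalVal (hε : 0 < ε) {Q : ∀ i : ℕ, Matrix (Fin (m i)) (Fin (m (i+1))) ℝ}
    (hQn : NonnegT N m Q) (hQ : FeasibleT N m a b Q) (f : ∀ i, Fin (m i) → ℝ) :
    dualGen N m C a b ε f ≤ primalVal N m C ε Q := by
  rw [dualGen_eq_sum_of_feasibleT hQ]
  exact Finset.sum_le_sum fun i hi => frob_sub_sum_exp_le (C i) (Q i) (edgePot N m f i)
    (hQn i (mem_Icc.1 hi).1 (mem_Icc.1 hi).2) hε

lemma primalVal_eq_dualGen (hε : ε ≠ 0) {f : ∀ i, Fin (m i) → ℝ}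
    {P : ∀ i : ℕ, Matrix (Fin (m i)) (Fin (m (i+1))) ℝ}
    (hP : ∀ i ∈ Icc 1 (N+2), P i = gibbsPlan N m C ε f i) (hPf : FeasibleT N m a b P) :
    primalVal N m C ε P = dualGen N m C a b ε f := by
  rw [dualGen_eq_sum_of_feasibleT hPf]
  exact (Finset.sum_congr rfl fun i hi => frob_sub_sum_exp_eq (C i) (P i) (edgePot N m f i) hε
    fun j k => by rw [hP i hi]; rfl).symm

lemma eq_gibbsPlan_of_scaling {K P : ∀ i : ℕ, Matrix (Fin (m i)) (Fin (m (i+1))) ℝ}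
    {f u : ∀ i, Fin (m i) → ℝ} (hK : ∀ i j k, K i j k = exp (-C i j k / ε))
    (hu : ∀ i j, u i j = exp (f i j / ε))
    (hP : ∀ i, 1 ≤ i → i ≤ N + 1 →
      P i = diagonal (u i) * K i * diagonal (fun k => (u (i+1) k)⁻¹))
    (hlast : P (N+2) = diagonal (u (N+2)) * K (N+2) * diagonal (u (N+3))) :
    ∀ i ∈ Icc 1 (N+2), P i = gibbsPlan N m C ε f i := by
  intro i hi
  ext j k
  rcases (mem_Icc.1 hi).2.lt_or_eq with hlt | rfl
  · rw [hP i (mem_Icc.1 hi).1 (by omega), mul_diagonal, diagonal_mul, hu, hu, hK, ← exp_neg,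
      ← exp_add, ← exp_add]
    simp only [gibbsPlan, edgePot, edgeSign_of_le (show i ≤ N + 1 by omega), of_apply]
    ring_nf
  · rw [hlast, mul_diagonal, diagonal_mul, hu, hu, hK, ← exp_add, ← exp_add]
    simp only [gibbsPlan, edgePot, edgeSign_self_add_two, of_apply]
    ring_nf

end Chain

theorem dual_optimal_gives_optimal_plans_seqOT_general
    (N : ℕ) (m : ℕ → ℕ)
    (C : ∀ i : ℕ, Matrix (Fin (m i)) (Fin (m (i+1))) ℝ)
    (a : Fin (m 1) → ℝ) (b : Fin (m (N+3)) → ℝ)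
    (ε : ℝ) (hε : 0 < ε)
    (K : ∀ i : ℕ, Matrix (Fin (m i)) (Fin (m (i+1))) ℝ)
    (hK : ∀ i j k, K i j k = Real.exp (-C i j k / ε))
    (fhat : ∀ i : ℕ, Fin (m i) → ℝ)
    (hopt : ∀ g : ∀ i : ℕ, Fin (m i) → ℝ,
      dualGen N m C a b ε g ≤ dualGen N m C a b ε fhat)
    (uhat : ∀ i : ℕ, Fin (m i) → ℝ)
    (huhat : ∀ i j, uhat i j = Real.exp (fhat i j / ε))
    (Phat : ∀ i : ℕ, Matrix (Fin (m i)) (Fin (m (i+1))) ℝ)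
    (hPhat1 : ∀ i : ℕ, 1 ≤ i → i ≤ N + 1 →
      Phat i = Matrix.diagonal (uhat i) * K i * Matrix.diagonal (fun k => (uhat (i+1) k)⁻¹))
    (hPhat2 : Phat (N+2) =
      Matrix.diagonal (uhat (N+2)) * K (N+2) * Matrix.diagonal (uhat (N+3))) :
    FeasibleT N m a b Phat ∧
      ∀ Q : ∀ i : ℕ, Matrix (Fin (m i)) (Fin (m (i+1))) ℝ,
        NonnegT N m Q → FeasibleT N m a b Q →
        primalVal N m C ε Phat ≤ primalVal N m C ε Q := by
  have hgibbs := eq_gibbsPlan_of_scaling hK huhat hPhat1 hPhat2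
  have hfeas : FeasibleT N m a b Phat := feasibleT_of_constraintPairing_eq fun v => by
    rw [← constraintPairing_gibbsPlan_of_forall_le hε.ne' hopt v]
    exact Finset.sum_congr rfl fun i hi => by rw [hgibbs i hi]
  refine ⟨hfeas, fun Q hQn hQ => ?_⟩
  rw [primalVal_eq_dualGen hε.ne' hgibbs hfeas]
  exact dualGen_le_primalVal hε hQn hQ fhat

/-- **Optimal plans from dual-optimal vectors** (Cor. 3.4): if `f̂` maximizes the dual
function and `û⁽ⁱ⁾ = exp(f̂⁽ⁱ⁾/ε)` entrywise, then the tuple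
`P̂⁽ⁱ⁾ = diag(û⁽ⁱ⁾) K⁽ⁱ⁾ diag(1/û⁽ⁱ⁺¹⁾)` (for `i ≤ M − 1`),
`P̂⁽ᴹ⁾ = diag(û⁽ᴹ⁾) K⁽ᴹ⁾ diag(û⁽ᴹ⁺¹⁾)` is feasible and optimal for the regularized
sequentially composed OT problem. -/
theorem dual_optimal_gives_optimal_plans_seqOT
    (N : ℕ) (m : ℕ → ℕ) (hm : ∀ i, 0 < m i)
    (C : ∀ i : ℕ, Matrix (Fin (m i)) (Fin (m (i+1))) ℝ)
    (hC : ∀ i, ∀ j k, 0 ≤ C i j k)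
    (a : Fin (m 1) → ℝ) (b : Fin (m (N+3)) → ℝ)
    (ha : ∀ j, 0 ≤ a j) (hb : ∀ k, 0 ≤ b k)
    (hasum : ∑ j, a j = 1) (hbsum : ∑ k, b k = 1)
    (ε : ℝ) (hε : 0 < ε)
    (K : ∀ i : ℕ, Matrix (Fin (m i)) (Fin (m (i+1))) ℝ)
    (hK : ∀ i j k, K i j k = Real.exp (-C i j k / ε))
    (fhat : ∀ i : ℕ, Fin (m i) → ℝ)
    (hopt : ∀ g : ∀ i : ℕ, Fin (m i) → ℝ,
      dualGen N m C a b ε g ≤ dualGen N m C a b ε fhat)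
    (uhat : ∀ i : ℕ, Fin (m i) → ℝ)
    (huhat : ∀ i j, uhat i j = Real.exp (fhat i j / ε))
    (Phat : ∀ i : ℕ, Matrix (Fin (m i)) (Fin (m (i+1))) ℝ)
    (hPhat1 : ∀ i : ℕ, 1 ≤ i → i ≤ N + 1 →
      Phat i = Matrix.diagonal (uhat i) * K i * Matrix.diagonal (fun k => (uhat (i+1) k)⁻¹))
    (hPhat2 : Phat (N+2) =
      Matrix.diagonal (uhat (N+2)) * K (N+2) * Matrix.diagonal (uhat (N+3))) :
    FeasibleT N m a b Phat ∧
      ∀ Q : ∀ i : ℕ, Matrix (Fin (m i)) (Fin (m (i+1))) ℝ,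
        NonnegT N m Q → FeasibleT N m a b Q →
        primalVal N m C ε Phat ≤ primalVal N m C ε Q :=
  dual_optimal_gives_optimal_plans_seqOT_general N m C a b ε hε K hK fhat hopt uhat huhat Phat
    hPhat1 hPhat2
end
end

section
/- Convergence of marginals for M = 2: assume a dual-optimal triple (û^(1), û^(2), û^(3)) exists, and set D := max(λ(K^(1)), λ(K^(2))) and d := max(d_H(u^(0,1), û^(1)), d_H(u^(0,3), û^(3))). Then for every n ≥ 1: d_H(a, P^(n,1)1_{m2}) = 0, d_H(b, (P^(n,2))ᵀ1_{m2}) = 0, and d_H((P^(n,1))ᵀ1_{m1}, P^(n,2)1_{m3}) ≤ 2d(1 + D²)D^{2n−1}. -/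
open Matrix Finset Real

noncomputable section

/-- The Hilbert projective (pseudo)metric on the positive orthant:
`d_H(u,v) = log((max_i u_i/v_i) · (max_j v_j/u_j))`. -/
def dH {m : ℕ} (u v : Fin m → ℝ) : ℝ :=
  Real.log ((⨆ i, u i / v i) * (⨆ j, v j / u j))

/-- Birkhoff's ratio `γ(A) = max_{i,j,k,l} (A_{ik}A_{jl})/(A_{jk}A_{il})`. -/
def birkhoffGamma {n m : ℕ} (A : Matrix (Fin n) (Fin m) ℝ) : ℝ :=
  ⨆ p : (Fin n × Fin n) × Fin m × Fin m,
    A p.1.1 p.2.1 * A p.1.2 p.2.2 / (A p.1.2 p.2.1 * A p.1.1 p.2.2)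

/-- Birkhoff's contraction coefficient `λ(A) = (√γ(A) − 1)/(√γ(A) + 1)`. -/
def birkhoffLambda {n m : ℕ} (A : Matrix (Fin n) (Fin m) ℝ) : ℝ :=
  (Real.sqrt (birkhoffGamma A) - 1) / (Real.sqrt (birkhoffGamma A) + 1)

/-- The dual (Lagrangian) function for the sequentially composed OT problem with `M = 2`. -/
def dual2 {m1 m2 m3 : ℕ} (a : Fin m1 → ℝ) (b : Fin m3 → ℝ) (ε : ℝ)
    (C1 : Matrix (Fin m1) (Fin m2) ℝ) (C2 : Matrix (Fin m2) (Fin m3) ℝ)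
    (f1 : Fin m1 → ℝ) (f2 : Fin m2 → ℝ) (f3 : Fin m3 → ℝ) : ℝ :=
  (∑ j, f1 j * a j) + (∑ l, f3 l * b l)
    - ε * ((∑ j, ∑ k, Real.exp ((f1 j - f2 k - C1 j k) / ε))
      + ∑ k, ∑ l, Real.exp ((f2 k + f3 l - C2 k l) / ε))

/-- The matrix `diag(u) K diag(1/v)` induced by the first pair of Sinkhorn vectors. -/
def indMat1 {m1 m2 : ℕ} (u : Fin m1 → ℝ) (K : Matrix (Fin m1) (Fin m2) ℝ)
    (v : Fin m2 → ℝ) : Matrix (Fin m1) (Fin m2) ℝ :=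
  Matrix.diagonal u * K * Matrix.diagonal (fun k => (v k)⁻¹)

/-- The matrix `diag(v) K diag(w)` induced by the second pair of Sinkhorn vectors. -/
def indMat2 {m2 m3 : ℕ} (v : Fin m2 → ℝ) (K : Matrix (Fin m2) (Fin m3) ℝ)
    (w : Fin m3 → ℝ) : Matrix (Fin m2) (Fin m3) ℝ :=
  Matrix.diagonal v * K * Matrix.diagonal w

/-
Dual optimality of `(û¹, û², û³)` says that the matrices induced by `û` have row marginal `a`,
column marginal `b` and equal middle marginals; equivalently, `û` is a fixed point of the three
Sinkhorn half-steps. In the Hilbert metric, entrywise multiplication or division by a vector and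
entrywise inversion do not increase distances, the square root halves them, and a positive matrix
`K` contracts them by Birkhoff's coefficient `λ(K)`. Hence every half-step shrinks the distance of
the iterates to `û` by the factor `D`. The outer marginals are matched exactly after every step,
and the gap between the two middle marginals is bounded through the triangle inequality at the
common middle marginal of `û`.

For Birkhoff's bound, the inequality for `(Au)ᵢ (Av)ⱼ / ((Av)ᵢ (Au)ⱼ)` becomes, after clearing
denominators, linear in the ratio vector `u / v`, so it suffices to treat ratio vectors taking
only the two extreme values. That case is an inequality between four block sums, which reduces to
`(1 + g σ) / (g + σ) ≤ σ ^ ((g - 1) / (g + 1))` for `g = √γ(A)`.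
-/

section HilbertMetric

variable {m : ℕ} {u v w u' v' : Fin m → ℝ}

lemma div_le_iSup_div (u v : Fin m → ℝ) (k : Fin m) : u k / v k ≤ ⨆ i, u i / v i :=
  le_ciSup (f := fun i => u i / v i) (Set.finite_range _).bddAbove k

lemma div_mul_div_le_exp_dH (hu : ∀ i, 0 < u i) (hv : ∀ i, 0 < v i) (i j : Fin m) :
    u i / v i * (v j / u j) ≤ Real.exp (dH u v) := by
  have hij := mul_pos (div_pos (hu i) (hv i)) (div_pos (hv j) (hu j))
  have h := mul_le_mul (div_le_iSup_div u v i) (div_le_iSup_div v u j) (div_pos (hv j) (hu j)).le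
    ((div_pos (hu i) (hv i)).le.trans (div_le_iSup_div u v i))
  rwa [dH, Real.exp_log (hij.trans_le h)]

lemma dH_le_of_forall [Nonempty (Fin m)] (hu : ∀ i, 0 < u i) (hv : ∀ i, 0 < v i) {c : ℝ}
    (h : ∀ i j, u i / v i * (v j / u j) ≤ Real.exp c) : dH u v ≤ c := by
  obtain ⟨k⟩ := ‹Nonempty (Fin m)›
  have hpos : ∀ (x y : Fin m → ℝ), (∀ i, 0 < x i) → (∀ i, 0 < y i) → 0 < ⨆ i, x i / y i :=
    fun x y hx hy => (div_pos (hx k) (hy k)).trans_le (div_le_iSup_div x y k)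
  rw [dH, Real.log_le_iff_le_exp (mul_pos (hpos u v hu hv) (hpos v u hv hu)),
    Real.iSup_mul_of_nonneg (hpos v u hv hu).le]
  refine ciSup_le fun i => ?_
  rw [Real.mul_iSup_of_nonneg (div_pos (hu i) (hv i)).le]
  exact ciSup_le (h i)

lemma dH_comm (u v : Fin m → ℝ) : dH u v = dH v u := by
  rw [dH, dH, mul_comm]

lemma dH_nonneg [Nonempty (Fin m)] (hu : ∀ i, 0 < u i) (hv : ∀ i, 0 < v i) : 0 ≤ dH u v := by
  obtain ⟨k⟩ := ‹Nonempty (Fin m)›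
  have h := div_mul_div_le_exp_dH hu hv k k
  rwa [div_mul_div_cancel₀ (hv k).ne', div_self (hu k).ne', Real.one_le_exp_iff] at h

lemma dH_self [Nonempty (Fin m)] (hu : ∀ i, 0 < u i) : dH u u = 0 := by
  refine le_antisymm (dH_le_of_forall hu hu fun i j => ?_) (dH_nonneg hu hu)
  rw [div_self (hu i).ne', div_self (hu j).ne', one_mul, Real.exp_zero]

lemma dH_triangle [Nonempty (Fin m)] (hu : ∀ i, 0 < u i) (hv : ∀ i, 0 < v i)
    (hw : ∀ i, 0 < w i) : dH u w ≤ dH u v + dH v w := by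
  refine dH_le_of_forall hu hw fun i j => ?_
  have := (hu j).ne'; have := (hv i).ne'; have := (hv j).ne'; have := (hw i).ne'
  calc u i / w i * (w j / u j) = u i / v i * (v j / u j) * (v i / w i * (w j / v j)) := by
        field_simp
    _ ≤ Real.exp (dH u v) * Real.exp (dH v w) :=
        mul_le_mul (div_mul_div_le_exp_dH hu hv i j) (div_mul_div_le_exp_dH hv hw i j)
          (mul_pos (div_pos (hv i) (hw i)) (div_pos (hw j) (hv j))).le (Real.exp_pos _).le
    _ = Real.exp (dH u v + dH v w) := (Real.exp_add _ _).symm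

lemma dH_mul_mul_le [Nonempty (Fin m)] (hu : ∀ i, 0 < u i) (hv : ∀ i, 0 < v i)
    (hu' : ∀ i, 0 < u' i) (hv' : ∀ i, 0 < v' i) : dH (u * v) (u' * v') ≤ dH u u' + dH v v' := by
  refine dH_le_of_forall (fun i => mul_pos (hu i) (hv i)) (fun i => mul_pos (hu' i) (hv' i))
    fun i j => ?_
  have := (hu j).ne'; have := (hv j).ne'; have := (hu' i).ne'; have := (hv' i).ne'
  calc (u * v) i / (u' * v') i * ((u' * v') j / (u * v) j)
        = u i / u' i * (u' j / u j) * (v i / v' i * (v' j / v j)) := by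
        simp only [Pi.mul_apply]
        field_simp
    _ ≤ Real.exp (dH u u') * Real.exp (dH v v') :=
        mul_le_mul (div_mul_div_le_exp_dH hu hu' i j) (div_mul_div_le_exp_dH hv hv' i j)
          (mul_pos (div_pos (hv i) (hv' i)) (div_pos (hv' j) (hv j))).le (Real.exp_pos _).le
    _ = Real.exp (dH u u' + dH v v') := (Real.exp_add _ _).symm

lemma dH_inv_inv (u v : Fin m → ℝ) : dH u⁻¹ v⁻¹ = dH v u := by
  simp only [dH, Pi.inv_apply, inv_div_inv]

lemma dH_div_div_le [Nonempty (Fin m)] (hu : ∀ i, 0 < u i) (hv : ∀ i, 0 < v i)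
    (hu' : ∀ i, 0 < u' i) (hv' : ∀ i, 0 < v' i) : dH (u / v) (u' / v') ≤ dH u u' + dH v v' := by
  rw [div_eq_mul_inv, div_eq_mul_inv, ← dH_inv_inv v' v, dH_comm v'⁻¹]
  exact dH_mul_mul_le hu (fun i => inv_pos.2 (hv i)) hu' (fun i => inv_pos.2 (hv' i))

lemma dH_sqrt_le [Nonempty (Fin m)] (hu : ∀ i, 0 < u i) (hv : ∀ i, 0 < v i) :
    dH (fun i => √(u i)) (fun i => √(v i)) ≤ dH u v / 2 := by
  refine dH_le_of_forall (fun i => Real.sqrt_pos.2 (hu i)) (fun i => Real.sqrt_pos.2 (hv i))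
    fun i j => ?_
  rw [← Real.sqrt_div (hu i).le, ← Real.sqrt_div (hv j).le,
    ← Real.sqrt_mul (div_pos (hu i) (hv i)).le, Real.exp_half]
  exact Real.sqrt_le_sqrt (div_mul_div_le_exp_dH hu hv i j)

end HilbertMetric

lemma one_add_mul_div_add_le_rpow {g x : ℝ} (hg : 1 ≤ g) (hx : 1 ≤ x) :
    (1 + g * x) / (g + x) ≤ x ^ ((g - 1) / (g + 1)) := by
  set c := (g - 1) / (g + 1)
  let G : ℝ → ℝ := fun y => c * Real.log y - Real.log (1 + g * y) + Real.log (g + y)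
  have hderiv : ∀ y ∈ Set.Ici (1 : ℝ),
      HasDerivAt G (c * y⁻¹ - g / (1 + g * y) + 1 / (g + y)) y := by
    intro y (hy : 1 ≤ y)
    have h1 : HasDerivAt (fun y => 1 + g * y) g y := by
      simpa using ((hasDerivAt_id y).const_mul g).const_add 1
    have h2 : HasDerivAt (fun y => g + y) 1 y := (hasDerivAt_id y).const_add g
    exact (((Real.hasDerivAt_log (by positivity)).const_mul c).sub
      (h1.log (by positivity))).add (h2.log (by positivity))
  have hmono : MonotoneOn G (Set.Ici 1) := by
    refine monotoneOn_of_hasDerivWithinAt_nonneg (convex_Ici 1)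
      (fun y hy => (hderiv y hy).continuousAt.continuousWithinAt)
      (fun y hy => (hderiv y (interior_subset hy)).hasDerivWithinAt) fun y hy => ?_
    rw [interior_Ici] at hy
    have hy : 1 < y := hy
    have hkey : c * y⁻¹ - g / (1 + g * y) + 1 / (g + y)
        = (g - 1) * g * (y - 1) ^ 2 / ((g + 1) * y * (1 + g * y) * (g + y)) := by
      simp only [c]
      field_simp
      ring
    rw [hkey]
    have : 0 ≤ g - 1 := by linarith
    positivity
  have hG : G 1 ≤ G x := hmono Set.self_mem_Ici hx hx
  simp only [G, Real.log_one, mul_zero, mul_one, add_comm 1 g] at hG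
  rw [Real.le_rpow_iff_log_le (by positivity) (by positivity), Real.log_div (by positivity)
    (by positivity)]
  linarith

lemma birkhoff_two_block_poly {g σ P₁ P₂ Q₁ Q₂ : ℝ} (hg : 1 ≤ g) (hσ : 1 ≤ σ)
    (hP₁ : 0 ≤ P₁) (hP₂ : 0 ≤ P₂) (hQ₁ : 0 ≤ Q₁) (hQ₂ : 0 ≤ Q₂)
    (hc : P₂ * Q₁ ≤ g ^ 2 * (P₁ * Q₂)) :
    (g + σ) ^ 2 * ((P₁ + σ ^ 2 * P₂) * (Q₁ + Q₂))
      ≤ (1 + g * σ) ^ 2 * ((P₁ + P₂) * (Q₁ + σ ^ 2 * Q₂)) := by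
  have hg2 : 0 ≤ g ^ 2 - 1 := by nlinarith
  have hσ2 : 0 ≤ σ ^ 2 - 1 := by nlinarith
  -- the right-hand side minus the left-hand side is `(σ ^ 2 - 1) * B`
  set B := (g ^ 2 - 1) * (P₁ * Q₁ + σ ^ 2 * (P₂ * Q₂))
    + g * (g + 2 * σ + g * σ ^ 2) * (P₁ * Q₂) - (1 + 2 * g * σ + σ ^ 2) * (P₂ * Q₁)
  suffices hB : 0 ≤ B by nlinarith [mul_nonneg hσ2 hB]
  rcases le_or_gt ((1 + 2 * g * σ + σ ^ 2) * Q₁) (σ ^ 2 * (g ^ 2 - 1) * Q₂) with hQ | hQ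
  · have := mul_le_mul_of_nonneg_left hQ hP₂
    have : 0 ≤ g * (g + 2 * σ + g * σ ^ 2) * (P₁ * Q₂) := by positivity
    have : 0 ≤ (g ^ 2 - 1) * (P₁ * Q₁) := by positivity
    nlinarith
  · -- `Q₁ * B` is a product of two nonpositive factors plus a square
    have hQ₁ : 0 < Q₁ := by
      by_contra h
      have : Q₁ = 0 := by linarith
      subst this
      nlinarith [mul_nonneg hσ2 hQ₂]
    have hprod := mul_nonneg_of_nonpos_of_nonpos (sub_nonpos.2 hQ.le) (sub_nonpos.2 hc)
    have hsq : 0 ≤ (g ^ 2 - 1) * (P₁ * (Q₁ - g * σ * Q₂) ^ 2) := by positivity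
    refine nonneg_of_mul_nonneg_right (a := Q₁) ?_ hQ₁
    nlinarith

lemma birkhoff_two_block {g α β P₁ P₂ Q₁ Q₂ : ℝ} (hg : 1 ≤ g) (hα : 0 < α) (hαβ : α ≤ β)
    (hP₁ : 0 ≤ P₁) (hP₂ : 0 ≤ P₂) (hQ₁ : 0 ≤ Q₁) (hQ₂ : 0 ≤ Q₂)
    (hc : P₂ * Q₁ ≤ g ^ 2 * (P₁ * Q₂)) :
    (α * P₁ + β * P₂) * (Q₁ + Q₂)
      ≤ (β / α) ^ ((g - 1) / (g + 1)) * ((P₁ + P₂) * (α * Q₁ + β * Q₂)) := by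
  set T := (β / α) ^ ((g - 1) / (g + 1))
  set σ := √(β / α)
  have hσ : 1 ≤ σ := Real.one_le_sqrt.2 ((one_le_div hα).2 hαβ)
  have hσ2 : σ ^ 2 = β / α := Real.sq_sqrt (div_pos (hα.trans_le hαβ) hα).le
  have hβ : β = α * σ ^ 2 := by rw [hσ2]; field_simp
  have hrpow : (1 + g * σ) ^ 2 ≤ (g + σ) ^ 2 * (β / α) ^ ((g - 1) / (g + 1)) := by
    have h := one_add_mul_div_add_le_rpow hg hσ
    rw [div_le_iff₀ (by positivity)] at h
    calc (1 + g * σ) ^ 2 ≤ (σ ^ ((g - 1) / (g + 1)) * (g + σ)) ^ 2 :=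
          pow_le_pow_left₀ (by positivity) h 2
      _ = (g + σ) ^ 2 * (σ ^ 2) ^ ((g - 1) / (g + 1)) := by
          rw [mul_pow, ← Real.rpow_natCast, ← Real.rpow_natCast σ,
            ← Real.rpow_mul (by positivity), ← Real.rpow_mul (by positivity),
            mul_comm ((g - 1) / (g + 1))]
          ring
      _ = (g + σ) ^ 2 * (β / α) ^ ((g - 1) / (g + 1)) := by rw [hσ2]
  have hpoly := birkhoff_two_block_poly hg hσ hP₁ hP₂ hQ₁ hQ₂ hc
  have hscaled : (P₁ + σ ^ 2 * P₂) * (Q₁ + Q₂)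
      ≤ (β / α) ^ ((g - 1) / (g + 1)) * ((P₁ + P₂) * (Q₁ + σ ^ 2 * Q₂)) := by
    refine le_of_mul_le_mul_left ?_ (by positivity : 0 < (g + σ) ^ 2)
    calc _ ≤ _ := hpoly
      _ ≤ _ := mul_le_mul_of_nonneg_right hrpow (by positivity)
      _ = _ := by ring
  calc (α * P₁ + β * P₂) * (Q₁ + Q₂) = α * ((P₁ + σ ^ 2 * P₂) * (Q₁ + Q₂)) := by
        rw [hβ]; ring
    _ ≤ α * (T * ((P₁ + P₂) * (Q₁ + σ ^ 2 * Q₂))) := mul_le_mul_of_nonneg_left hscaled hα.le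
    _ = T * ((P₁ + P₂) * (α * Q₁ + β * Q₂)) := by rw [hβ]; ring

section BirkhoffSumInequality

variable {ι : Type*} [Fintype ι] {p q r : ι → ℝ} {α β g : ℝ}

lemma birkhoff_sum_ineq_of_two_valued (hp : ∀ k, 0 ≤ p k) (hq : ∀ k, 0 ≤ q k) (hg : 1 ≤ g)
    (hα : 0 < α) (hαβ : α ≤ β) (hpq : ∀ k l, p k * q l ≤ g ^ 2 * (p l * q k))
    (hr : ∀ k, r k = α ∨ r k = β) :
    (∑ k, p k * r k) * ∑ k, q k
      ≤ (β / α) ^ ((g - 1) / (g + 1)) * ((∑ k, p k) * ∑ k, q k * r k) := by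
  classical
  set S := univ.filter (fun k => r k = β)
  have hsplit : ∀ f : ι → ℝ, ∑ k, f k * r k = α * ∑ k ∈ Sᶜ, f k + β * ∑ k ∈ S, f k := by
    intro f
    rw [← Finset.sum_add_sum_compl S, Finset.mul_sum, Finset.mul_sum, add_comm]
    congr 1 <;> refine Finset.sum_congr rfl fun k hk => ?_
    · rw [(hr k).resolve_right (by simpa [S] using hk), mul_comm]
    · rw [(Finset.mem_filter.1 hk).2, mul_comm]
  have hsum : ∀ f : ι → ℝ, ∑ k, f k = ∑ k ∈ Sᶜ, f k + ∑ k ∈ S, f k := fun f => by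
    rw [add_comm, Finset.sum_add_sum_compl]
  have hcross : (∑ k ∈ S, p k) * ∑ k ∈ Sᶜ, q k
      ≤ g ^ 2 * ((∑ k ∈ Sᶜ, p k) * ∑ k ∈ S, q k) := by
    calc (∑ k ∈ S, p k) * ∑ k ∈ Sᶜ, q k = ∑ k ∈ S, ∑ l ∈ Sᶜ, p k * q l :=
          Finset.sum_mul_sum ..
      _ ≤ ∑ k ∈ S, ∑ l ∈ Sᶜ, g ^ 2 * (p l * q k) :=
          Finset.sum_le_sum fun k _ => Finset.sum_le_sum fun l _ => hpq k l
      _ = g ^ 2 * ((∑ k ∈ Sᶜ, p k) * ∑ k ∈ S, q k) := by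
          rw [Finset.sum_mul_sum, Finset.sum_comm, Finset.mul_sum]
          simp_rw [Finset.mul_sum]
  rw [hsplit p, hsplit q, hsum p, hsum q]
  exact birkhoff_two_block hg hα hαβ (Finset.sum_nonneg fun k _ => hp k)
    (Finset.sum_nonneg fun k _ => hp k) (Finset.sum_nonneg fun k _ => hq k)
    (Finset.sum_nonneg fun k _ => hq k) hcross

lemma birkhoff_sum_ineq (hp : ∀ k, 0 ≤ p k) (hq : ∀ k, 0 ≤ q k) (hg : 1 ≤ g)
    (hα : 0 < α) (hαβ : α ≤ β) (hpq : ∀ k l, p k * q l ≤ g ^ 2 * (p l * q k))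
    (hrα : ∀ k, α ≤ r k) (hrβ : ∀ k, r k ≤ β) :
    (∑ k, p k * r k) * ∑ k, q k
      ≤ (β / α) ^ ((g - 1) / (g + 1)) * ((∑ k, p k) * ∑ k, q k * r k) := by
  set T := (β / α) ^ ((g - 1) / (g + 1))
  set P := ∑ k, p k
  set Q := ∑ k, q k
  -- the difference of the two sides is linear in `r`, so it is minimised at a vertex of the box
  set w : ι → ℝ := fun k => T * P * q k - Q * p k
  have hw : ∀ r : ι → ℝ,
      T * (P * ∑ k, q k * r k) - (∑ k, p k * r k) * Q = ∑ k, w k * r k := by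
    intro r
    rw [Finset.mul_sum, Finset.mul_sum, Finset.sum_mul, ← Finset.sum_sub_distrib]
    exact Finset.sum_congr rfl fun k _ => by ring
  set r' : ι → ℝ := fun k => if w k < 0 then β else α
  have hvertex := birkhoff_sum_ineq_of_two_valued hp hq hg hα hαβ hpq (r := r')
    fun k => by by_cases h : w k < 0 <;> simp [r', h]
  have hle : ∑ k, w k * r' k ≤ ∑ k, w k * r k := Finset.sum_le_sum fun k _ => by
    by_cases h : w k < 0
    · simp only [r', h, if_true]
      nlinarith [hrβ k]
    · simp only [r', h, if_false]
      nlinarith [hrα k]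
  rw [← sub_nonneg, hw] at hvertex ⊢
  linarith

end BirkhoffSumInequality

section BirkhoffCoefficient

variable {n m : ℕ} {A : Matrix (Fin n) (Fin m) ℝ}

lemma mulVec_pos_of_pos [Nonempty (Fin m)] (hA : ∀ i k, 0 < A i k) {u : Fin m → ℝ}
    (hu : ∀ k, 0 < u k) (i : Fin n) : 0 < (A *ᵥ u) i :=
  Finset.sum_pos (fun k _ => mul_pos (hA i k) (hu k)) Finset.univ_nonempty

lemma mul_le_birkhoffGamma_mul (hA : ∀ i k, 0 < A i k) (i j : Fin n) (k l : Fin m) :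
    A i k * A j l ≤ birkhoffGamma A * (A j k * A i l) := by
  rw [← div_le_iff₀ (mul_pos (hA j k) (hA i l))]
  exact le_ciSup (f := fun p : (Fin n × Fin n) × Fin m × Fin m =>
    A p.1.1 p.2.1 * A p.1.2 p.2.2 / (A p.1.2 p.2.1 * A p.1.1 p.2.2))
    (Set.finite_range _).bddAbove ((i, j), (k, l))

lemma one_le_birkhoffGamma [Nonempty (Fin n)] [Nonempty (Fin m)] (hA : ∀ i k, 0 < A i k) :
    1 ≤ birkhoffGamma A := by
  obtain ⟨i⟩ := ‹Nonempty (Fin n)›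
  obtain ⟨k⟩ := ‹Nonempty (Fin m)›
  have h := mul_le_birkhoffGamma_mul hA i i k k
  exact le_of_mul_le_mul_right (by rwa [one_mul]) (mul_pos (hA i k) (hA i k))

lemma birkhoffLambda_nonneg [Nonempty (Fin n)] [Nonempty (Fin m)] (hA : ∀ i k, 0 < A i k) :
    0 ≤ birkhoffLambda A := by
  have := Real.one_le_sqrt.2 (one_le_birkhoffGamma hA)
  exact div_nonneg (by linarith) (by linarith)

lemma birkhoffLambda_transpose (A : Matrix (Fin n) (Fin m) ℝ) :
    birkhoffLambda Aᵀ = birkhoffLambda A := by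
  have hγ : birkhoffGamma Aᵀ = birkhoffGamma A := by
    rw [birkhoffGamma, birkhoffGamma, ← (Equiv.prodComm _ _).iSup_comp]
    congr 1
    funext x
    simp only [Equiv.prodComm_apply, Prod.fst_swap, Prod.snd_swap, transpose_apply]
    ring
  rw [birkhoffLambda, birkhoffLambda, hγ]

theorem dH_mulVec_le [Nonempty (Fin n)] [Nonempty (Fin m)] (hA : ∀ i k, 0 < A i k)
    {u v : Fin m → ℝ} (hu : ∀ k, 0 < u k) (hv : ∀ k, 0 < v k) :
    dH (A *ᵥ u) (A *ᵥ v) ≤ birkhoffLambda A * dH u v := by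
  set g := √(birkhoffGamma A)
  have hg : 1 ≤ g := Real.one_le_sqrt.2 (one_le_birkhoffGamma hA)
  have hg2 : g ^ 2 = birkhoffGamma A := Real.sq_sqrt (by linarith [one_le_birkhoffGamma hA])
  set d := dH u v
  obtain ⟨k₀, hk₀⟩ := Finite.exists_max fun k => u k / v k
  set β := u k₀ / v k₀
  have hβ : 0 < β := div_pos (hu k₀) (hv k₀)
  have hlow : ∀ k, β / Real.exp d ≤ u k / v k := fun k => by
    have h := div_mul_div_le_exp_dH hu hv k₀ k
    rw [← inv_div (u k), ← div_eq_mul_inv, div_le_iff₀ (div_pos (hu k) (hv k))] at h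
    rwa [div_le_iff₀ (Real.exp_pos _), mul_comm]
  have hβd : β / (β / Real.exp d) = Real.exp d := by field_simp
  have hsum : ∀ i, ∑ k, A i k * v k * (u k / v k) = (A *ᵥ u) i := fun i =>
    Finset.sum_congr rfl fun k _ => by field_simp [(hv k).ne']
  refine dH_le_of_forall (mulVec_pos_of_pos hA hu) (mulVec_pos_of_pos hA hv) fun i j => ?_
  have key := birkhoff_sum_ineq (p := fun k => A i k * v k) (q := fun k => A j k * v k)
    (r := fun k => u k / v k) (fun k => (mul_pos (hA i k) (hv k)).le)
    (fun k => (mul_pos (hA j k) (hv k)).le) hg (div_pos hβ (Real.exp_pos d))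
    (div_le_self hβ.le (Real.one_le_exp_iff.2 (dH_nonneg hu hv)))
    (fun k l => by
      rw [hg2]
      nlinarith [mul_le_birkhoffGamma_mul hA i j k l, mul_pos (hv k) (hv l)])
    hlow hk₀
  rw [hsum, hsum, hβd, ← Real.exp_mul, mul_comm d] at key
  rwa [div_mul_div_comm,
    div_le_iff₀ (mul_pos (mulVec_pos_of_pos hA hv i) (mulVec_pos_of_pos hA hu j))]

end BirkhoffCoefficient

section DualOptimality

lemma sum_apply_update_sub {ι : Type*} [Fintype ι] [DecidableEq ι] (F : ι → ℝ → ℝ)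
    (g : ι → ℝ) (i : ι) (t : ℝ) :
    ∑ j, F j (Function.update g i t j) - F i t = ∑ j, F j (g j) - F i (g i) := by
  have h₁ := Finset.add_sum_erase univ (fun j => F j (Function.update g i t j)) (mem_univ i)
  have h₂ := Finset.add_sum_erase univ (fun j => F j (g j)) (mem_univ i)
  have h₃ :
      ∑ j ∈ univ.erase i, F j (Function.update g i t j) = ∑ j ∈ univ.erase i, F j (g j) :=
    Finset.sum_congr rfl fun j hj => by rw [Function.update_of_ne (Finset.ne_of_mem_erase hj)]
  simp only [Function.update_self] at h₁
  linarith

lemma hasDerivAt_sum_exp {ι : Type*} [Fintype ι] {h : ι → ℝ → ℝ} {c t : ℝ}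
    (hh : ∀ i, HasDerivAt (h i) c t) :
    HasDerivAt (fun t => ∑ i, Real.exp (h i t)) (c * ∑ i, Real.exp (h i t)) t := by
  simpa [Finset.mul_sum, mul_comm] using HasDerivAt.fun_sum fun i _ => (hh i).exp

variable {m1 m2 m3 : ℕ} {a : Fin m1 → ℝ} {b : Fin m3 → ℝ} {ε : ℝ}
  {C1 : Matrix (Fin m1) (Fin m2) ℝ} {C2 : Matrix (Fin m2) (Fin m3) ℝ}
  {f1 : Fin m1 → ℝ} {f2 : Fin m2 → ℝ} {f3 : Fin m3 → ℝ}

lemma dual2_stationary_left (hε : ε ≠ 0)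
    (hopt : ∀ g1, dual2 a b ε C1 C2 g1 f2 f3 ≤ dual2 a b ε C1 C2 f1 f2 f3) (j : Fin m1) :
    ∑ k, Real.exp ((f1 j - f2 k - C1 j k) / ε) = a j := by
  let E : Fin m1 → ℝ → ℝ := fun j t => ∑ k, Real.exp ((t - f2 k - C1 j k) / ε)
  let φ : ℝ → ℝ := fun t => t * a j - ε * E j t
  -- as a function of the `j`-th coordinate of `f1`, the dual is `φ` plus a constant
  have hmax : IsLocalMax φ (f1 j) := Filter.Eventually.of_forall fun t => by
    have h₁ := sum_apply_update_sub (fun j t => t * a j) f1 j t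
    have h₂ := sum_apply_update_sub E f1 j t
    have := hopt (Function.update f1 j t)
    simp only [dual2, E] at this h₁ h₂
    simp only [φ, E]
    linear_combination this - h₁ + ε * h₂
  have hderiv : HasDerivAt φ (a j - ∑ k, Real.exp ((f1 j - f2 k - C1 j k) / ε)) (f1 j) := by
    refine (((hasDerivAt_id' (f1 j)).mul_const (a j)).fun_sub ((hasDerivAt_sum_exp fun k =>
      (((hasDerivAt_id' (f1 j)).sub_const (f2 k)).sub_const (C1 j k)).div_const ε).const_mul
        ε)).congr_deriv ?_
    field_simp
  linarith [hmax.hasDerivAt_eq_zero hderiv]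

lemma dual2_stationary_right (hε : ε ≠ 0)
    (hopt : ∀ g3, dual2 a b ε C1 C2 f1 f2 g3 ≤ dual2 a b ε C1 C2 f1 f2 f3) (l : Fin m3) :
    ∑ k, Real.exp ((f2 k + f3 l - C2 k l) / ε) = b l := by
  let E : Fin m3 → ℝ → ℝ := fun l t => ∑ k, Real.exp ((f2 k + t - C2 k l) / ε)
  let φ : ℝ → ℝ := fun t => t * b l - ε * E l t
  have hswap : ∀ g3 : Fin m3 → ℝ,
      ∑ k, ∑ l, Real.exp ((f2 k + g3 l - C2 k l) / ε) = ∑ l, E l (g3 l) :=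
    fun _ => Finset.sum_comm
  have hmax : IsLocalMax φ (f3 l) := Filter.Eventually.of_forall fun t => by
    have h₁ := sum_apply_update_sub (fun l t => t * b l) f3 l t
    have h₂ := sum_apply_update_sub E f3 l t
    have := hopt (Function.update f3 l t)
    simp only [dual2, hswap] at this
    simp only [φ]
    linear_combination this - h₁ + ε * h₂
  have hderiv : HasDerivAt φ (b l - ∑ k, Real.exp ((f2 k + f3 l - C2 k l) / ε)) (f3 l) := by
    refine (((hasDerivAt_id' (f3 l)).mul_const (b l)).fun_sub ((hasDerivAt_sum_exp fun k =>
      (((hasDerivAt_id' (f3 l)).const_add (f2 k)).sub_const (C2 k l)).div_const ε).const_mul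
        ε)).congr_deriv ?_
    field_simp
  linarith [hmax.hasDerivAt_eq_zero hderiv]

lemma dual2_stationary_middle (hε : ε ≠ 0)
    (hopt : ∀ g2, dual2 a b ε C1 C2 f1 g2 f3 ≤ dual2 a b ε C1 C2 f1 f2 f3) (k : Fin m2) :
    ∑ j, Real.exp ((f1 j - f2 k - C1 j k) / ε) = ∑ l, Real.exp ((f2 k + f3 l - C2 k l) / ε) := by
  let E : Fin m2 → ℝ → ℝ := fun k t =>
    ∑ j, Real.exp ((f1 j - t - C1 j k) / ε) + ∑ l, Real.exp ((t + f3 l - C2 k l) / ε)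
  let φ : ℝ → ℝ := fun t => -(ε * E k t)
  have hswap : ∀ g2 : Fin m2 → ℝ, ∑ j, ∑ k, Real.exp ((f1 j - g2 k - C1 j k) / ε)
      + ∑ k, ∑ l, Real.exp ((g2 k + f3 l - C2 k l) / ε) = ∑ k, E k (g2 k) :=
    fun _ => by rw [Finset.sum_comm, ← Finset.sum_add_distrib]
  have hmax : IsLocalMax φ (f2 k) := Filter.Eventually.of_forall fun t => by
    have h := sum_apply_update_sub E f2 k t
    have := hopt (Function.update f2 k t)
    simp only [dual2, hswap] at this
    simp only [φ]
    linear_combination this + ε * h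
  have hderiv : HasDerivAt φ (∑ j, Real.exp ((f1 j - f2 k - C1 j k) / ε)
      - ∑ l, Real.exp ((f2 k + f3 l - C2 k l) / ε)) (f2 k) := by
    refine (((hasDerivAt_sum_exp fun j =>
      (((hasDerivAt_id' (f2 k)).const_sub (f1 j)).sub_const (C1 j k)).div_const ε).add
        (hasDerivAt_sum_exp fun l =>
      (((hasDerivAt_id' (f2 k)).add_const (f3 l)).sub_const (C2 k l)).div_const ε)).const_mul
        ε).neg.congr_deriv ?_
    field_simp
    ring
  linarith [hmax.hasDerivAt_eq_zero hderiv]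

end DualOptimality

section Marginals

variable {m1 m2 m3 : ℕ}

lemma indMat1_apply (u : Fin m1 → ℝ) (K : Matrix (Fin m1) (Fin m2) ℝ) (v : Fin m2 → ℝ)
    (j : Fin m1) (k : Fin m2) : indMat1 u K v j k = u j * K j k * (v k)⁻¹ := by
  rw [indMat1, mul_diagonal, diagonal_mul]

lemma indMat2_apply (v : Fin m2 → ℝ) (K : Matrix (Fin m2) (Fin m3) ℝ) (w : Fin m3 → ℝ)
    (k : Fin m2) (l : Fin m3) : indMat2 v K w k l = v k * K k l * w l := by
  rw [indMat2, mul_diagonal, diagonal_mul]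

lemma indMat1_mulVec_one (u : Fin m1 → ℝ) (K : Matrix (Fin m1) (Fin m2) ℝ) (v : Fin m2 → ℝ) :
    (indMat1 u K v *ᵥ fun _ => 1) = u * (K *ᵥ v⁻¹) := by
  ext j
  simp only [mulVec, dotProduct, indMat1_apply, Pi.mul_apply, Pi.inv_apply, mul_assoc, mul_one,
    mul_sum]

lemma indMat1_transpose_mulVec_one (u : Fin m1 → ℝ) (K : Matrix (Fin m1) (Fin m2) ℝ)
    (v : Fin m2 → ℝ) : ((indMat1 u K v)ᵀ *ᵥ fun _ => 1) = (Kᵀ *ᵥ u) / v := by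
  ext k
  simp only [mulVec, dotProduct, transpose_apply, indMat1_apply, Pi.div_apply, mul_one,
    div_eq_mul_inv, sum_mul]
  exact Finset.sum_congr rfl fun _ _ => by ring

lemma indMat2_mulVec_one (v : Fin m2 → ℝ) (K : Matrix (Fin m2) (Fin m3) ℝ) (w : Fin m3 → ℝ) :
    (indMat2 v K w *ᵥ fun _ => 1) = v * (K *ᵥ w) := by
  ext k
  simp only [mulVec, dotProduct, indMat2_apply, Pi.mul_apply, mul_assoc, mul_one, mul_sum]

lemma indMat2_transpose_mulVec_one (v : Fin m2 → ℝ) (K : Matrix (Fin m2) (Fin m3) ℝ)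
    (w : Fin m3 → ℝ) : ((indMat2 v K w)ᵀ *ᵥ fun _ => 1) = (Kᵀ *ᵥ v) * w := by
  ext l
  simp only [mulVec, dotProduct, transpose_apply, indMat2_apply, Pi.mul_apply, mul_one, sum_mul]
  exact Finset.sum_congr rfl fun _ _ => by ring

lemma indMat_marginals_of_dual2_optimal {a : Fin m1 → ℝ} {b : Fin m3 → ℝ} {ε : ℝ} (hε : 0 < ε)
    {C1 : Matrix (Fin m1) (Fin m2) ℝ} {C2 : Matrix (Fin m2) (Fin m3) ℝ}
    {K1 : Matrix (Fin m1) (Fin m2) ℝ} {K2 : Matrix (Fin m2) (Fin m3) ℝ}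
    (hK1 : ∀ j k, K1 j k = Real.exp (-C1 j k / ε)) (hK2 : ∀ k l, K2 k l = Real.exp (-C2 k l / ε))
    {u1 : Fin m1 → ℝ} {u2 : Fin m2 → ℝ} {u3 : Fin m3 → ℝ}
    (hu1 : ∀ j, 0 < u1 j) (hu2 : ∀ k, 0 < u2 k) (hu3 : ∀ l, 0 < u3 l)
    (hopt : ∀ f1 f2 f3, dual2 a b ε C1 C2 f1 f2 f3 ≤
      dual2 a b ε C1 C2 (fun j => ε * Real.log (u1 j)) (fun k => ε * Real.log (u2 k))
        (fun l => ε * Real.log (u3 l))) :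
    (indMat1 u1 K1 u2 *ᵥ fun _ => 1) = a ∧ ((indMat2 u2 K2 u3)ᵀ *ᵥ fun _ => 1) = b ∧
      ((indMat1 u1 K1 u2)ᵀ *ᵥ fun _ => 1) = indMat2 u2 K2 u3 *ᵥ fun _ => 1 := by
  have hexp : ∀ x, 0 < x → Real.exp (ε * Real.log x / ε) = x := fun x hx => by
    rw [mul_div_cancel_left₀ _ hε.ne', Real.exp_log hx]
  have hP1 : ∀ j k, Real.exp ((ε * Real.log (u1 j) - ε * Real.log (u2 k) - C1 j k) / ε)
      = indMat1 u1 K1 u2 j k := fun j k => by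
    rw [indMat1_apply, hK1, sub_div, sub_div, Real.exp_sub, Real.exp_sub, hexp _ (hu1 j),
      hexp _ (hu2 k), neg_div, Real.exp_neg]
    field_simp
  have hP2 : ∀ k l, Real.exp ((ε * Real.log (u2 k) + ε * Real.log (u3 l) - C2 k l) / ε)
      = indMat2 u2 K2 u3 k l := fun k l => by
    rw [indMat2_apply, hK2, sub_div, add_div, Real.exp_sub, Real.exp_add, hexp _ (hu2 k),
      hexp _ (hu3 l), neg_div, Real.exp_neg]
    field_simp
  have h1 := dual2_stationary_left hε.ne' fun f1 => hopt f1 _ _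
  have h2 := dual2_stationary_middle hε.ne' fun f2 => hopt _ f2 _
  have h3 := dual2_stationary_right hε.ne' fun f3 => hopt _ _ f3
  simp only [hP1, hP2] at h1 h2 h3
  refine ⟨funext fun j => ?_, funext fun l => ?_, funext fun k => ?_⟩ <;>
    simp only [mulVec, dotProduct, transpose_apply, mul_one]
  exacts [h1 j, h3 l, h2 k]

end Marginals

section Sinkhorn

variable {m1 m2 m3 : ℕ} {a : Fin m1 → ℝ} {b : Fin m3 → ℝ}
  {K1 : Matrix (Fin m1) (Fin m2) ℝ} {K2 : Matrix (Fin m2) (Fin m3) ℝ}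

def sinkhornLeft (a : Fin m1 → ℝ) (K1 : Matrix (Fin m1) (Fin m2) ℝ) (v : Fin m2 → ℝ) :
    Fin m1 → ℝ :=
  a / (K1 *ᵥ v⁻¹)

def sinkhornRight (b : Fin m3 → ℝ) (K2 : Matrix (Fin m2) (Fin m3) ℝ) (v : Fin m2 → ℝ) :
    Fin m3 → ℝ :=
  b / (K2ᵀ *ᵥ v)

def sinkhornMiddle (K1 : Matrix (Fin m1) (Fin m2) ℝ) (K2 : Matrix (Fin m2) (Fin m3) ℝ)
    (u : Fin m1 → ℝ) (w : Fin m3 → ℝ) : Fin m2 → ℝ :=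
  fun k => √((K1ᵀ *ᵥ u) k / (K2 *ᵥ w) k)

lemma sinkhornLeft_pos [Nonempty (Fin m2)] (ha : ∀ j, 0 < a j) (hK1 : ∀ j k, 0 < K1 j k)
    {v : Fin m2 → ℝ} (hv : ∀ k, 0 < v k) (j : Fin m1) : 0 < sinkhornLeft a K1 v j :=
  div_pos (ha j) (mulVec_pos_of_pos hK1 (fun k => inv_pos.2 (hv k)) j)

lemma sinkhornRight_pos [Nonempty (Fin m2)] (hb : ∀ l, 0 < b l) (hK2 : ∀ k l, 0 < K2 k l)
    {v : Fin m2 → ℝ} (hv : ∀ k, 0 < v k) (l : Fin m3) : 0 < sinkhornRight b K2 v l :=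
  div_pos (hb l) (mulVec_pos_of_pos (fun l k => hK2 k l) hv l)

lemma sinkhornMiddle_pos [Nonempty (Fin m1)] [Nonempty (Fin m3)] (hK1 : ∀ j k, 0 < K1 j k)
    (hK2 : ∀ k l, 0 < K2 k l) {u : Fin m1 → ℝ} {w : Fin m3 → ℝ} (hu : ∀ j, 0 < u j)
    (hw : ∀ l, 0 < w l) (k : Fin m2) : 0 < sinkhornMiddle K1 K2 u w k :=
  Real.sqrt_pos.2
    (div_pos (mulVec_pos_of_pos (fun k j => hK1 j k) hu k) (mulVec_pos_of_pos hK2 hw k))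

lemma dH_sinkhornLeft_le [Nonempty (Fin m1)] [Nonempty (Fin m2)] (ha : ∀ j, 0 < a j)
    (hK1 : ∀ j k, 0 < K1 j k) {v v' : Fin m2 → ℝ} (hv : ∀ k, 0 < v k) (hv' : ∀ k, 0 < v' k) :
    dH (sinkhornLeft a K1 v) (sinkhornLeft a K1 v') ≤ birkhoffLambda K1 * dH v v' := by
  have hinv : ∀ x : Fin m2 → ℝ, (∀ k, 0 < x k) → ∀ k, 0 < x⁻¹ k := fun x hx k => inv_pos.2 (hx k)
  calc dH (sinkhornLeft a K1 v) (sinkhornLeft a K1 v')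
      ≤ dH a a + dH (K1 *ᵥ v⁻¹) (K1 *ᵥ v'⁻¹) :=
        dH_div_div_le ha (mulVec_pos_of_pos hK1 (hinv v hv)) ha
          (mulVec_pos_of_pos hK1 (hinv v' hv'))
    _ ≤ 0 + birkhoffLambda K1 * dH v⁻¹ v'⁻¹ :=
        add_le_add (dH_self ha).le (dH_mulVec_le hK1 (hinv v hv) (hinv v' hv'))
    _ = birkhoffLambda K1 * dH v v' := by rw [zero_add, dH_inv_inv, dH_comm]

lemma dH_sinkhornRight_le [Nonempty (Fin m2)] [Nonempty (Fin m3)] (hb : ∀ l, 0 < b l)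
    (hK2 : ∀ k l, 0 < K2 k l) {v v' : Fin m2 → ℝ} (hv : ∀ k, 0 < v k) (hv' : ∀ k, 0 < v' k) :
    dH (sinkhornRight b K2 v) (sinkhornRight b K2 v') ≤ birkhoffLambda K2 * dH v v' := by
  have hK2t : ∀ l k, 0 < K2ᵀ l k := fun l k => hK2 k l
  calc dH (sinkhornRight b K2 v) (sinkhornRight b K2 v')
      ≤ dH b b + dH (K2ᵀ *ᵥ v) (K2ᵀ *ᵥ v') :=
        dH_div_div_le hb (mulVec_pos_of_pos hK2t hv) hb (mulVec_pos_of_pos hK2t hv')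
    _ ≤ 0 + birkhoffLambda K2ᵀ * dH v v' := add_le_add (dH_self hb).le (dH_mulVec_le hK2t hv hv')
    _ = birkhoffLambda K2 * dH v v' := by rw [zero_add, birkhoffLambda_transpose]

lemma dH_sinkhornMiddle_le [Nonempty (Fin m1)] [Nonempty (Fin m2)] [Nonempty (Fin m3)]
    (hK1 : ∀ j k, 0 < K1 j k) (hK2 : ∀ k l, 0 < K2 k l) {u u' : Fin m1 → ℝ} {w w' : Fin m3 → ℝ}
    (hu : ∀ j, 0 < u j) (hu' : ∀ j, 0 < u' j) (hw : ∀ l, 0 < w l) (hw' : ∀ l, 0 < w' l) :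
    dH (sinkhornMiddle K1 K2 u w) (sinkhornMiddle K1 K2 u' w')
      ≤ (birkhoffLambda K1 * dH u u' + birkhoffLambda K2 * dH w w') / 2 := by
  have hK1t : ∀ k j, 0 < K1ᵀ k j := fun k j => hK1 j k
  calc dH (sinkhornMiddle K1 K2 u w) (sinkhornMiddle K1 K2 u' w')
      ≤ dH ((K1ᵀ *ᵥ u) / (K2 *ᵥ w)) ((K1ᵀ *ᵥ u') / (K2 *ᵥ w')) / 2 :=
        dH_sqrt_le (fun k => div_pos (mulVec_pos_of_pos hK1t hu k) (mulVec_pos_of_pos hK2 hw k))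
          (fun k => div_pos (mulVec_pos_of_pos hK1t hu' k) (mulVec_pos_of_pos hK2 hw' k))
    _ ≤ (dH (K1ᵀ *ᵥ u) (K1ᵀ *ᵥ u') + dH (K2 *ᵥ w) (K2 *ᵥ w')) / 2 := by
        gcongr
        exact dH_div_div_le (mulVec_pos_of_pos hK1t hu) (mulVec_pos_of_pos hK2 hw)
          (mulVec_pos_of_pos hK1t hu') (mulVec_pos_of_pos hK2 hw')
    _ ≤ (birkhoffLambda K1 * dH u u' + birkhoffLambda K2 * dH w w') / 2 := by
        rw [← birkhoffLambda_transpose K1]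
        gcongr
        exacts [dH_mulVec_le hK1t hu hu', dH_mulVec_le hK2 hw hw']

end Sinkhorn

section SinkhornConvergence

variable {m1 m2 m3 : ℕ} {a : Fin m1 → ℝ} {b : Fin m3 → ℝ}
  {K1 : Matrix (Fin m1) (Fin m2) ℝ} {K2 : Matrix (Fin m2) (Fin m3) ℝ}

lemma indMat1_sinkhornLeft_mulVec_one [Nonempty (Fin m2)] (hK1 : ∀ j k, 0 < K1 j k)
    {v : Fin m2 → ℝ} (hv : ∀ k, 0 < v k) :
    (indMat1 (sinkhornLeft a K1 v) K1 v *ᵥ fun _ => 1) = a := by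
  ext j
  rw [indMat1_mulVec_one]
  exact div_mul_cancel₀ (a j) (mulVec_pos_of_pos hK1 (fun k => inv_pos.2 (hv k)) j).ne'

lemma indMat2_sinkhornRight_transpose_mulVec_one [Nonempty (Fin m2)] (hK2 : ∀ k l, 0 < K2 k l)
    {v : Fin m2 → ℝ} (hv : ∀ k, 0 < v k) :
    ((indMat2 v K2 (sinkhornRight b K2 v))ᵀ *ᵥ fun _ => 1) = b := by
  ext l
  rw [indMat2_transpose_mulVec_one]
  exact mul_div_cancel₀ (b l) (mulVec_pos_of_pos (fun l k => hK2 k l) hv l).ne'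

lemma sinkhorn_fixed_point_of_marginals [Nonempty (Fin m2)] [Nonempty (Fin m3)]
    (hK1 : ∀ j k, 0 < K1 j k) (hK2 : ∀ k l, 0 < K2 k l) {u1 : Fin m1 → ℝ} {u2 : Fin m2 → ℝ}
    {u3 : Fin m3 → ℝ} (hu2 : ∀ k, 0 < u2 k) (hu3 : ∀ l, 0 < u3 l)
    (h1 : (indMat1 u1 K1 u2 *ᵥ fun _ => 1) = a) (h3 : ((indMat2 u2 K2 u3)ᵀ *ᵥ fun _ => 1) = b)
    (h2 : ((indMat1 u1 K1 u2)ᵀ *ᵥ fun _ => 1) = indMat2 u2 K2 u3 *ᵥ fun _ => 1) :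
    u1 = sinkhornLeft a K1 u2 ∧ u3 = sinkhornRight b K2 u2 ∧ u2 = sinkhornMiddle K1 K2 u1 u3 := by
  rw [indMat1_mulVec_one] at h1
  rw [indMat2_transpose_mulVec_one] at h3
  rw [indMat1_transpose_mulVec_one, indMat2_mulVec_one] at h2
  refine ⟨funext fun j => ?_, funext fun l => ?_, funext fun k => ?_⟩
  · rw [sinkhornLeft, ← h1, Pi.div_apply, Pi.mul_apply, mul_div_cancel_right₀]
    exact (mulVec_pos_of_pos hK1 (fun k => inv_pos.2 (hu2 k)) j).ne'
  · rw [sinkhornRight, ← h3, Pi.div_apply, Pi.mul_apply, mul_div_cancel_left₀]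
    exact (mulVec_pos_of_pos (fun l k => hK2 k l) hu2 l).ne'
  · have hk := congrFun h2 k
    have hK2u3 := mulVec_pos_of_pos hK2 hu3 k
    simp only [Pi.div_apply, Pi.mul_apply] at hk
    rw [div_eq_iff (hu2 k).ne'] at hk
    rw [sinkhornMiddle, hk, mul_right_comm, mul_div_cancel_right₀ _ hK2u3.ne',
      Real.sqrt_mul_self (hu2 k).le]

lemma dH_indMat_middle_marginals_le [Nonempty (Fin m1)] [Nonempty (Fin m2)] [Nonempty (Fin m3)]
    (hK1 : ∀ j k, 0 < K1 j k) (hK2 : ∀ k l, 0 < K2 k l) {D : ℝ} (hD1 : birkhoffLambda K1 ≤ D)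
    (hD2 : birkhoffLambda K2 ≤ D) {u1 uh1 : Fin m1 → ℝ} {u2 uh2 : Fin m2 → ℝ}
    {u3 uh3 : Fin m3 → ℝ} (hu1 : ∀ j, 0 < u1 j) (hu2 : ∀ k, 0 < u2 k) (hu3 : ∀ l, 0 < u3 l)
    (huh1 : ∀ j, 0 < uh1 j) (huh2 : ∀ k, 0 < uh2 k) (huh3 : ∀ l, 0 < uh3 l)
    (hfix : ((indMat1 uh1 K1 uh2)ᵀ *ᵥ fun _ => 1) = indMat2 uh2 K2 uh3 *ᵥ fun _ => 1) :
    dH ((indMat1 u1 K1 u2)ᵀ *ᵥ fun _ => 1) (indMat2 u2 K2 u3 *ᵥ fun _ => 1)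
      ≤ 2 * (D * max (dH u1 uh1) (dH u3 uh3) + dH u2 uh2) := by
  have hK1t : ∀ k j, 0 < K1ᵀ k j := fun k j => hK1 j k
  have hD : 0 ≤ D := (birkhoffLambda_nonneg hK1).trans hD1
  rw [indMat1_transpose_mulVec_one, indMat2_mulVec_one] at hfix ⊢
  calc dH ((K1ᵀ *ᵥ u1) / u2) (u2 * (K2 *ᵥ u3))
      ≤ dH ((K1ᵀ *ᵥ u1) / u2) ((K1ᵀ *ᵥ uh1) / uh2) + dH (uh2 * (K2 *ᵥ uh3)) (u2 * (K2 *ᵥ u3)) := by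
        rw [← hfix]
        exact dH_triangle (fun k => div_pos (mulVec_pos_of_pos hK1t hu1 k) (hu2 k))
          (fun k => div_pos (mulVec_pos_of_pos hK1t huh1 k) (huh2 k))
          (fun k => mul_pos (hu2 k) (mulVec_pos_of_pos hK2 hu3 k))
    _ ≤ (dH (K1ᵀ *ᵥ u1) (K1ᵀ *ᵥ uh1) + dH u2 uh2) + (dH uh2 u2 + dH (K2 *ᵥ uh3) (K2 *ᵥ u3)) :=
        add_le_add
          (dH_div_div_le (mulVec_pos_of_pos hK1t hu1) hu2 (mulVec_pos_of_pos hK1t huh1) huh2)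
          (dH_mul_mul_le huh2 (mulVec_pos_of_pos hK2 huh3) hu2 (mulVec_pos_of_pos hK2 hu3))
    _ ≤ (birkhoffLambda K1 * dH u1 uh1 + dH u2 uh2)
          + (dH u2 uh2 + birkhoffLambda K2 * dH u3 uh3) := by
        rw [dH_comm uh2, dH_comm (K2 *ᵥ uh3), ← birkhoffLambda_transpose K1]
        gcongr
        exacts [dH_mulVec_le hK1t hu1 huh1, dH_mulVec_le hK2 hu3 huh3]
    _ ≤ (D * max (dH u1 uh1) (dH u3 uh3) + dH u2 uh2)
          + (dH u2 uh2 + D * max (dH u1 uh1) (dH u3 uh3)) := by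
        gcongr ?_ + _ + (_ + ?_)
        · exact mul_le_mul hD1 (le_max_left _ _) (dH_nonneg hu1 huh1) hD
        · exact mul_le_mul hD2 (le_max_right _ _) (dH_nonneg hu3 huh3) hD
    _ = 2 * (D * max (dH u1 uh1) (dH u3 uh3) + dH u2 uh2) := by ring

structure IsSinkhornIteration (a : Fin m1 → ℝ) (b : Fin m3 → ℝ) (K1 : Matrix (Fin m1) (Fin m2) ℝ)
    (K2 : Matrix (Fin m2) (Fin m3) ℝ) (u1 : ℕ → Fin m1 → ℝ) (u2 : ℕ → Fin m2 → ℝ)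
    (u3 : ℕ → Fin m3 → ℝ) : Prop where
  middle : ∀ n, u2 (n + 1) = sinkhornMiddle K1 K2 (u1 n) (u3 n)
  left : ∀ n, u1 (n + 1) = sinkhornLeft a K1 (u2 (n + 1))
  right : ∀ n, u3 (n + 1) = sinkhornRight b K2 (u2 (n + 1))

lemma IsSinkhornIteration.pos [Nonempty (Fin m1)] [Nonempty (Fin m2)] [Nonempty (Fin m3)]
    {u1 : ℕ → Fin m1 → ℝ} {u2 : ℕ → Fin m2 → ℝ} {u3 : ℕ → Fin m3 → ℝ}
    (hS : IsSinkhornIteration a b K1 K2 u1 u2 u3) (ha : ∀ j, 0 < a j) (hb : ∀ l, 0 < b l)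
    (hK1 : ∀ j k, 0 < K1 j k) (hK2 : ∀ k l, 0 < K2 k l) (h01 : ∀ j, 0 < u1 0 j)
    (h03 : ∀ l, 0 < u3 0 l) (n : ℕ) :
    (∀ j, 0 < u1 n j) ∧ (∀ k, 0 < u2 (n + 1) k) ∧ (∀ l, 0 < u3 n l) := by
  induction n with
  | zero => exact ⟨h01, by rw [hS.middle]; exact sinkhornMiddle_pos hK1 hK2 h01 h03, h03⟩
  | succ n ih =>
    have h1 : ∀ j, 0 < u1 (n + 1) j := by rw [hS.left]; exact sinkhornLeft_pos ha hK1 ih.2.1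
    have h3 : ∀ l, 0 < u3 (n + 1) l := by rw [hS.right]; exact sinkhornRight_pos hb hK2 ih.2.1
    exact ⟨h1, by rw [hS.middle]; exact sinkhornMiddle_pos hK1 hK2 h1 h3, h3⟩

lemma IsSinkhornIteration.dH_le [Nonempty (Fin m1)] [Nonempty (Fin m2)] [Nonempty (Fin m3)]
    {u1 : ℕ → Fin m1 → ℝ} {u2 : ℕ → Fin m2 → ℝ} {u3 : ℕ → Fin m3 → ℝ}
    (hS : IsSinkhornIteration a b K1 K2 u1 u2 u3) (ha : ∀ j, 0 < a j) (hb : ∀ l, 0 < b l)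
    (hK1 : ∀ j k, 0 < K1 j k) (hK2 : ∀ k l, 0 < K2 k l) (h01 : ∀ j, 0 < u1 0 j)
    (h03 : ∀ l, 0 < u3 0 l) {D : ℝ} (hD1 : birkhoffLambda K1 ≤ D) (hD2 : birkhoffLambda K2 ≤ D)
    {uh1 : Fin m1 → ℝ} {uh2 : Fin m2 → ℝ} {uh3 : Fin m3 → ℝ}
    (huh1 : ∀ j, 0 < uh1 j) (huh2 : ∀ k, 0 < uh2 k) (huh3 : ∀ l, 0 < uh3 l)
    (hfix1 : uh1 = sinkhornLeft a K1 uh2) (hfix3 : uh3 = sinkhornRight b K2 uh2)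
    (hfix2 : uh2 = sinkhornMiddle K1 K2 uh1 uh3) (n : ℕ) :
    max (dH (u1 n) uh1) (dH (u3 n) uh3) ≤ D ^ (2 * n) * max (dH (u1 0) uh1) (dH (u3 0) uh3) ∧
      dH (u2 (n + 1)) uh2 ≤ D ^ (2 * n + 1) * max (dH (u1 0) uh1) (dH (u3 0) uh3) := by
  have hpos := hS.pos ha hb hK1 hK2 h01 h03
  have hD : 0 ≤ D := (birkhoffLambda_nonneg hK1).trans hD1
  set e : ℕ → ℝ := fun n => max (dH (u1 n) uh1) (dH (u3 n) uh3)
  have hmiddle : ∀ n, dH (u2 (n + 1)) uh2 ≤ D * e n := fun n => by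
    obtain ⟨h1, -, h3⟩ := hpos n
    rw [hS.middle, hfix2]
    calc _ ≤ (birkhoffLambda K1 * dH (u1 n) uh1 + birkhoffLambda K2 * dH (u3 n) uh3) / 2 :=
          dH_sinkhornMiddle_le hK1 hK2 h1 huh1 h3 huh3
      _ ≤ (D * e n + D * e n) / 2 := by
          gcongr (?_ + ?_) / _
          · exact mul_le_mul hD1 (le_max_left _ _) (dH_nonneg h1 huh1) hD
          · exact mul_le_mul hD2 (le_max_right _ _) (dH_nonneg h3 huh3) hD
      _ = D * e n := by ring
  have hends : ∀ n, e (n + 1) ≤ D * dH (u2 (n + 1)) uh2 := fun n => by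
    have h2 := (hpos n).2.1
    have hD2' := mul_le_mul_of_nonneg_right hD2 (dH_nonneg h2 huh2)
    have hD1' := mul_le_mul_of_nonneg_right hD1 (dH_nonneg h2 huh2)
    refine max_le ?_ ?_
    · rw [hS.left, hfix1]
      exact (dH_sinkhornLeft_le ha hK1 h2 huh2).trans hD1'
    · rw [hS.right, hfix3]
      exact (dH_sinkhornRight_le hb hK2 h2 huh2).trans hD2'
  have he : ∀ n, e n ≤ D ^ (2 * n) * e 0 := fun n => by
    induction n with
    | zero => simp
    | succ n ih =>
      calc e (n + 1) ≤ D * (D * e n) := (hends n).trans (mul_le_mul_of_nonneg_left (hmiddle n) hD)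
        _ ≤ D * (D * (D ^ (2 * n) * e 0)) := by gcongr
        _ = D ^ (2 * (n + 1)) * e 0 := by ring
  refine ⟨he n, (hmiddle n).trans ?_⟩
  calc D * e n ≤ D * (D ^ (2 * n) * e 0) := by gcongr; exact he n
    _ = D ^ (2 * n + 1) * e 0 := by ring

end SinkhornConvergence

theorem sinkhorn_marginal_convergence_M2_general
    {m1 m2 m3 : ℕ} (hm1 : 0 < m1) (hm2 : 0 < m2) (hm3 : 0 < m3)
    (C1 : Matrix (Fin m1) (Fin m2) ℝ) (C2 : Matrix (Fin m2) (Fin m3) ℝ)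
    (a : Fin m1 → ℝ) (b : Fin m3 → ℝ)
    (ha : ∀ j, 0 < a j) (hb : ∀ l, 0 < b l)
    (ε : ℝ) (hε : 0 < ε)
    (K1 : Matrix (Fin m1) (Fin m2) ℝ) (K2 : Matrix (Fin m2) (Fin m3) ℝ)
    (hK1 : ∀ j k, K1 j k = Real.exp (-C1 j k / ε))
    (hK2 : ∀ k l, K2 k l = Real.exp (-C2 k l / ε))
    (u1 : ℕ → Fin m1 → ℝ) (u2 : ℕ → Fin m2 → ℝ) (u3 : ℕ → Fin m3 → ℝ)
    (h01 : ∀ j, 0 < u1 0 j) (h03 : ∀ l, 0 < u3 0 l)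
    (hrec2 : ∀ n, u2 (n+1) = fun k => Real.sqrt ((K1ᵀ *ᵥ u1 n) k / (K2 *ᵥ u3 n) k))
    (hrec1 : ∀ n, u1 (n+1) = fun j => a j / (K1 *ᵥ fun k => (u2 (n+1) k)⁻¹) j)
    (hrec3 : ∀ n, u3 (n+1) = fun l => b l / (K2ᵀ *ᵥ u2 (n+1)) l)
    (uh1 : Fin m1 → ℝ) (uh2 : Fin m2 → ℝ) (uh3 : Fin m3 → ℝ)
    (hpos1 : ∀ j, 0 < uh1 j) (hpos2 : ∀ k, 0 < uh2 k) (hpos3 : ∀ l, 0 < uh3 l)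
    (hopt : ∀ (f1 : Fin m1 → ℝ) (f2 : Fin m2 → ℝ) (f3 : Fin m3 → ℝ),
      dual2 a b ε C1 C2 f1 f2 f3 ≤
        dual2 a b ε C1 C2 (fun j => ε * Real.log (uh1 j))
          (fun k => ε * Real.log (uh2 k)) (fun l => ε * Real.log (uh3 l)))
    (D d : ℝ)
    (hD : D = max (birkhoffLambda K1) (birkhoffLambda K2))
    (hd : d = max (dH (u1 0) uh1) (dH (u3 0) uh3)) :
    ∀ n : ℕ, 1 ≤ n →
      dH a (indMat1 (u1 n) K1 (u2 n) *ᵥ fun _ => 1) = 0 ∧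
      dH b ((indMat2 (u2 n) K2 (u3 n))ᵀ *ᵥ fun _ => 1) = 0 ∧
      dH ((indMat1 (u1 n) K1 (u2 n))ᵀ *ᵥ fun _ => 1)
          (indMat2 (u2 n) K2 (u3 n) *ᵥ fun _ => 1)
        ≤ 2 * d * (1 + D ^ 2) * D ^ (2 * n - 1) := by
  have := Fin.pos_iff_nonempty.mp hm1
  have := Fin.pos_iff_nonempty.mp hm2
  have := Fin.pos_iff_nonempty.mp hm3
  have hK1pos : ∀ j k, 0 < K1 j k := fun j k => hK1 j k ▸ Real.exp_pos _
  have hK2pos : ∀ k l, 0 < K2 k l := fun k l => hK2 k l ▸ Real.exp_pos _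
  have hD1 : birkhoffLambda K1 ≤ D := hD ▸ le_max_left _ _
  have hD2 : birkhoffLambda K2 ≤ D := hD ▸ le_max_right _ _
  have hS : IsSinkhornIteration a b K1 K2 u1 u2 u3 := ⟨hrec2, hrec1, hrec3⟩
  obtain ⟨hmarg1, hmarg3, hmarg2⟩ :=
    indMat_marginals_of_dual2_optimal hε hK1 hK2 hpos1 hpos2 hpos3 hopt
  obtain ⟨hfix1, hfix3, hfix2⟩ :=
    sinkhorn_fixed_point_of_marginals hK1pos hK2pos hpos2 hpos3 hmarg1 hmarg3 hmarg2
  have herr := hS.dH_le ha hb hK1pos hK2pos h01 h03 hD1 hD2 hpos1 hpos2 hpos3 hfix1 hfix3 hfix2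
  rw [← hd] at herr
  rintro _ hn
  obtain ⟨n, rfl⟩ := Nat.exists_eq_add_of_le' hn
  obtain ⟨hu1, -, hu3⟩ := hS.pos ha hb hK1pos hK2pos h01 h03 (n + 1)
  have hu2 := (hS.pos ha hb hK1pos hK2pos h01 h03 n).2.1
  refine ⟨?_, ?_, ?_⟩
  · rw [hS.left, indMat1_sinkhornLeft_mulVec_one hK1pos hu2, dH_self ha]
  · rw [hS.right, indMat2_sinkhornRight_transpose_mulVec_one hK2pos hu2, dH_self hb]
  · calc _ ≤ 2 * (D * max (dH (u1 (n + 1)) uh1) (dH (u3 (n + 1)) uh3) + dH (u2 (n + 1)) uh2) :=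
          dH_indMat_middle_marginals_le hK1pos hK2pos hD1 hD2 hu1 hu2 hu3 hpos1 hpos2 hpos3 hmarg2
      _ ≤ 2 * (D * (D ^ (2 * (n + 1)) * d) + D ^ (2 * n + 1) * d) := by
          gcongr
          · exact (birkhoffLambda_nonneg hK1pos).trans hD1
          exacts [(herr (n + 1)).1, (herr n).2]
      _ = 2 * d * (1 + D ^ 2) * D ^ (2 * (n + 1) - 1) := by
          rw [show 2 * (n + 1) - 1 = 2 * n + 1 by omega]
          ring

/-- **Convergence of the marginals for `M = 2`** (Prop. 3.7): the edge marginals of the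
induced matrices are exactly `a` and `b`, and the two boundary marginals converge
exponentially in the Hilbert pseudometric. -/
theorem sinkhorn_marginal_convergence_M2
    {m1 m2 m3 : ℕ} (hm1 : 0 < m1) (hm2 : 0 < m2) (hm3 : 0 < m3)
    (C1 : Matrix (Fin m1) (Fin m2) ℝ) (C2 : Matrix (Fin m2) (Fin m3) ℝ)
    (hC1 : ∀ j k, 0 ≤ C1 j k) (hC2 : ∀ k l, 0 ≤ C2 k l)
    (a : Fin m1 → ℝ) (b : Fin m3 → ℝ)
    (ha : ∀ j, 0 < a j) (hb : ∀ l, 0 < b l)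
    (hasum : ∑ j, a j = 1) (hbsum : ∑ l, b l = 1)
    (ε : ℝ) (hε : 0 < ε)
    (K1 : Matrix (Fin m1) (Fin m2) ℝ) (K2 : Matrix (Fin m2) (Fin m3) ℝ)
    (hK1 : ∀ j k, K1 j k = Real.exp (-C1 j k / ε))
    (hK2 : ∀ k l, K2 k l = Real.exp (-C2 k l / ε))
    (u1 : ℕ → Fin m1 → ℝ) (u2 : ℕ → Fin m2 → ℝ) (u3 : ℕ → Fin m3 → ℝ)
    (h01 : ∀ j, 0 < u1 0 j) (h02 : ∀ k, 0 < u2 0 k) (h03 : ∀ l, 0 < u3 0 l)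
    (hrec2 : ∀ n, u2 (n+1) = fun k => Real.sqrt ((K1ᵀ *ᵥ u1 n) k / (K2 *ᵥ u3 n) k))
    (hrec1 : ∀ n, u1 (n+1) = fun j => a j / (K1 *ᵥ fun k => (u2 (n+1) k)⁻¹) j)
    (hrec3 : ∀ n, u3 (n+1) = fun l => b l / (K2ᵀ *ᵥ u2 (n+1)) l)
    (uh1 : Fin m1 → ℝ) (uh2 : Fin m2 → ℝ) (uh3 : Fin m3 → ℝ)
    (hpos1 : ∀ j, 0 < uh1 j) (hpos2 : ∀ k, 0 < uh2 k) (hpos3 : ∀ l, 0 < uh3 l)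
    (hopt : ∀ (f1 : Fin m1 → ℝ) (f2 : Fin m2 → ℝ) (f3 : Fin m3 → ℝ),
      dual2 a b ε C1 C2 f1 f2 f3 ≤
        dual2 a b ε C1 C2 (fun j => ε * Real.log (uh1 j))
          (fun k => ε * Real.log (uh2 k)) (fun l => ε * Real.log (uh3 l)))
    (D d : ℝ)
    (hD : D = max (birkhoffLambda K1) (birkhoffLambda K2))
    (hd : d = max (dH (u1 0) uh1) (dH (u3 0) uh3)) :
    ∀ n : ℕ, 1 ≤ n →
      dH a (indMat1 (u1 n) K1 (u2 n) *ᵥ fun _ => 1) = 0 ∧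
      dH b ((indMat2 (u2 n) K2 (u3 n))ᵀ *ᵥ fun _ => 1) = 0 ∧
      dH ((indMat1 (u1 n) K1 (u2 n))ᵀ *ᵥ fun _ => 1)
          (indMat2 (u2 n) K2 (u3 n) *ᵥ fun _ => 1)
        ≤ 2 * d * (1 + D ^ 2) * D ^ (2 * n - 1) :=
  sinkhorn_marginal_convergence_M2_general hm1 hm2 hm3 C1 C2 a b ha hb ε hε K1 K2 hK1 hK2 u1 u2 u3
    h01 h03 hrec2 hrec1 hrec3 uh1 uh2 uh3 hpos1 hpos2 hpos3 hopt D d hD hd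
end
end
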